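/- arXiv:2203.05432 — 8 statements merged into one kernel-verified Lean document; each statement's English description precedes it below -/
import Mathlib

section
/- Let n and k be integers with k ≥ 1 and n > k+1. Then τ_{n,k} ≥ (2k-1)!! / ((n+k-1)(n+k-3)⋯(n-k+1)), where (n+k-1)(n+k-3)⋯(n-k+1) = ∏_{j=1}^{k} (n+k+1-2j). -/
open Polynomial Finset

/-- The odd double factorial `(2k-1)!! = 1·3·5⋯(2k-1)`. -/
noncomputable def oddDoubleFac (k : ℕ) : ℝ := ∏ j ∈ Finset.range k, (2 * (j : ℝ) + 1)

/-!
For `y = T_n^{(k)}` and `c = n² - k²`, the differential equation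
`(1 - x²) y'' = (2k + 1) x y' - c y` makes Sonin's function `c y² + (1 - x²) y'²`
nondecreasing on `[0, ∞)`: its derivative is `4k x y'²`. Since `T_n^{(k+1)}` is even or odd,
`ω ≥ 0`, so `c y(ω)²` is at least the value `c y(0)² + y'(0)²` at the origin. The recurrence
`y^{(j+2)}(0) = -(n² - j²) y^{(j)}(0)` determines the values at `0`: according to the parity of
`n + k`, either `y(0)` or `y'(0)` vanishes, and the other one is known exactly. Together with
`(m - 1)(m + 1) ≤ m²` this gives `|y(ω)| ≥ ∏_{l<k} (n² - l²) / ((n+k-1)(n+k-3)⋯(n-k+1))`,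
and `T_n^{(k)}(1) = ∏_{l<k} (n² - l²) / (2k-1)!!`.
-/

open Polynomial.Chebyshev Set

theorem Polynomial.iterate_derivative_comp_neg_X {R : Type*} [CommRing R] (p : R[X]) (k : ℕ) :
    derivative^[k] (p.comp (-X)) = (-1) ^ k * (derivative^[k] p).comp (-X) := by
  induction k generalizing p with
  | zero => simp
  | succ k ih => simp [ih (derivative p), derivative_comp, pow_succ]

theorem Polynomial.Chebyshev.iterate_derivative_T_real_eval_neg (n k : ℕ) (x : ℝ) :
    (derivative^[k] (T ℝ n)).eval (-x) = (-1) ^ (n + k) * (derivative^[k] (T ℝ n)).eval x := by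
  have hT : (T ℝ n).comp (-X) = Polynomial.C ((-1) ^ n) * T ℝ n :=
    Polynomial.funext fun y ↦ by simp
  have h := congrArg (fun p ↦ (derivative^[k] p).eval x) hT
  simp only [iterate_derivative_comp_neg_X, iterate_derivative_C_mul, eval_mul, eval_comp,
    eval_neg, eval_X, eval_pow, eval_one, eval_C] at h
  calc (derivative^[k] (T ℝ n)).eval (-x)
      = (-1) ^ k * ((-1) ^ k * (derivative^[k] (T ℝ n)).eval (-x)) := by
        rw [← mul_assoc, ← pow_add, ← two_mul, pow_mul, neg_one_sq, one_pow, one_mul]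
    _ = (-1) ^ (n + k) * (derivative^[k] (T ℝ n)).eval x := by rw [h]; ring

noncomputable def sonin (c : ℝ) (p : ℝ[X]) (x : ℝ) : ℝ :=
  c * p.eval x ^ 2 + (1 - x ^ 2) * (derivative p).eval x ^ 2

theorem monotoneOn_sonin {p : ℝ[X]} {a c : ℝ} (ha : 1 ≤ a)
    (hp : ∀ x, (1 - x ^ 2) * (derivative (derivative p)).eval x =
      a * x * (derivative p).eval x - c * p.eval x) :
    MonotoneOn (sonin c p) (Ici 0) := by
  have hderiv : ∀ x, HasDerivAt (sonin c p) (2 * (a - 1) * x * (derivative p).eval x ^ 2) x := by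
    intro x
    refine (((p.hasDerivAt x).fun_pow 2).const_mul c |>.fun_add
      (((hasDerivAt_pow 2 x).const_sub 1).fun_mul
        ((derivative p).hasDerivAt x |>.fun_pow 2))).congr_deriv ?_
    push_cast
    linear_combination (2 : ℝ) * eval x (derivative p) * hp x
  refine monotoneOn_of_hasDerivWithinAt_nonneg (convex_Ici 0)
    (fun x _ ↦ (hderiv x).continuousAt.continuousWithinAt)
    (fun x _ ↦ (hderiv x).hasDerivWithinAt) fun x hx ↦ ?_
  rw [interior_Ici] at hx
  have : 0 ≤ a - 1 := by linarith
  have : 0 < x := hx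
  positivity

noncomputable def centralProd (x : ℝ) (k : ℕ) : ℝ := ∏ j ∈ range k, (x + k - 1 - 2 * j)

theorem prod_Icc_eq_centralProd (x : ℝ) (k : ℕ) :
    ∏ j ∈ Icc 1 k, (x + k + 1 - 2 * (j : ℝ)) = centralProd x k := by
  rw [← Finset.Ico_add_one_right_eq_Icc, prod_Ico_eq_prod_range, Nat.add_sub_cancel, centralProd]
  refine prod_congr rfl fun j _ ↦ ?_
  push_cast
  ring

theorem centralProd_add_two (x : ℝ) (k : ℕ) :
    centralProd x (k + 2) = (x + k + 1) * (x - k - 1) * centralProd x k := by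
  rw [centralProd, centralProd, prod_range_succ', prod_range_succ]
  push_cast
  rw [prod_congr rfl fun (j : ℕ) _ ↦ show x + (k + 2) - 1 - 2 * ((j : ℝ) + 1) = x + k - 1 - 2 * j by
    ring]
  ring

theorem centralProd_pos {x : ℝ} {k : ℕ} (hk : (k : ℝ) < x + 1) : 0 < centralProd x k :=
  prod_pos fun j hj ↦ by
    have : (j : ℝ) + 1 ≤ k := by exact_mod_cast mem_range.mp hj
    linarith

theorem sq_centralProd_succ_le {x : ℝ} {k : ℕ} (hk : (k : ℝ) ≤ x) :
    centralProd x (k + 1) ^ 2 ≤ (x ^ 2 - k ^ 2) * centralProd x k ^ 2 := by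
  have hfirst : centralProd x (k + 1) = (x + k) * ∏ j ∈ range k, (x + k - 1 - 2 * j - 1) := by
    rw [centralProd, prod_range_succ', mul_comm]
    push_cast
    congr 1
    · ring
    · exact prod_congr rfl fun j _ ↦ by ring
  have hlast : centralProd x (k + 1) = (x - k) * ∏ j ∈ range k, (x + k - 1 - 2 * j + 1) := by
    rw [centralProd, prod_range_succ, mul_comm]
    push_cast
    congr 1
    · ring
    · exact prod_congr rfl fun j _ ↦ by ring
  -- termwise `(m - 1)(m + 1) ≤ m²`, where every `m = x + k - 1 - 2j` is at least `1`
  have hprod : (∏ j ∈ range k, (x + k - 1 - 2 * j - 1)) * ∏ j ∈ range k, (x + k - 1 - 2 * j + 1)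
      ≤ centralProd x k ^ 2 := by
    rw [← prod_mul_distrib, centralProd, sq, ← prod_mul_distrib]
    refine prod_le_prod (fun j hj ↦ ?_) fun j _ ↦ by nlinarith
    have : (j : ℝ) + 1 ≤ k := by exact_mod_cast mem_range.mp hj
    nlinarith
  calc centralProd x (k + 1) ^ 2
      = ((x + k) * (x - k)) * ((∏ j ∈ range k, (x + k - 1 - 2 * j - 1)) *
          ∏ j ∈ range k, (x + k - 1 - 2 * j + 1)) := by
        rw [sq]; nth_rewrite 1 [hfirst]; rw [hlast]; ring
    _ ≤ ((x + k) * (x - k)) * centralProd x k ^ 2 := by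
        gcongr
        have : (0 : ℝ) ≤ k := k.cast_nonneg
        nlinarith
    _ = (x ^ 2 - k ^ 2) * centralProd x k ^ 2 := by ring

theorem sq_centralProd_mul_iterate_derivative_T_eval_zero (n j : ℕ) :
    (centralProd n j * (derivative^[j] (T ℝ n)).eval 0) ^ 2 =
      (∏ l ∈ range j, ((n : ℝ) ^ 2 - l ^ 2)) ^ 2 * if Even (n + j) then 1 else 0 := by
  induction j using Nat.twoStepInduction with
  | zero =>
    rcases Nat.even_or_odd n with h | h
    · simp [centralProd, h, Int.even_coe_nat, neg_one_pow_eq_or]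
    · simp [centralProd, h, Nat.not_even_iff_odd.mpr h]
  | one =>
    rw [Function.iterate_one, T_derivative_eq_U]
    rcases Nat.even_or_odd n with h | h
    · simp [centralProd, h, Int.even_coe_nat]
    · simp [centralProd, h, mul_pow, ← pow_mul]
      ring
  | more j ih _ =>
    have hparity : Even (n + (j + 2)) ↔ Even (n + j) := by simp [← add_assoc, Nat.even_add_one]
    rw [centralProd_add_two, iterate_derivative_T_eval_zero_recurrence, prod_range_succ,
      prod_range_succ]
    simp only [hparity]
    push_cast
    linear_combination ((n : ℝ) ^ 2 - (j + 1) ^ 2) ^ 2 * ((n : ℝ) ^ 2 - j ^ 2) ^ 2 * ih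

theorem mul_sq_prod_le_sq_centralProd_mul_sonin_zero {n k : ℕ} (hk : k < n) :
    ((n : ℝ) ^ 2 - k ^ 2) * (∏ l ∈ range k, ((n : ℝ) ^ 2 - l ^ 2)) ^ 2 ≤
      centralProd n k ^ 2 * sonin ((n : ℝ) ^ 2 - k ^ 2) (derivative^[k] (T ℝ n)) 0 := by
  have hc : 0 < (n : ℝ) ^ 2 - k ^ 2 := sub_pos.2 (by gcongr)
  have h0 := sq_centralProd_mul_iterate_derivative_T_eval_zero n k
  have h1 := sq_centralProd_mul_iterate_derivative_T_eval_zero n (k + 1)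
  rw [prod_range_succ, ← add_assoc] at h1
  rw [sonin, ← Function.iterate_succ_apply' derivative]
  set c := (n : ℝ) ^ 2 - k ^ 2
  set A := ∏ l ∈ range k, ((n : ℝ) ^ 2 - l ^ 2)
  set P := centralProd n k
  set y₀ := eval 0 (derivative^[k] (T ℝ n))
  set y₁ := eval 0 (derivative^[k + 1] (T ℝ n))
  have hy₀ : 0 ≤ P ^ 2 * (c * y₀ ^ 2) := by positivity
  have hy₁ : 0 ≤ P ^ 2 * y₁ ^ 2 := by positivity
  suffices c * A ^ 2 ≤ P ^ 2 * (c * y₀ ^ 2) + P ^ 2 * y₁ ^ 2 by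
    simpa only [ne_eq, OfNat.ofNat_ne_zero, not_false_eq_true, zero_pow, sub_zero, one_mul,
      mul_add] using this
  by_cases he : Even (n + k)
  · rw [if_pos he, mul_one, mul_pow] at h0
    linear_combination hy₁ - c * h0
  · rw [if_pos (Nat.even_add_one.mpr he), mul_one] at h1
    have hP := sq_centralProd_succ_le (x := n) (k := k) (by exact_mod_cast hk.le)
    have : c * (c * A ^ 2) ≤ c * (P ^ 2 * y₁ ^ 2) := calc
      c * (c * A ^ 2) = centralProd n (k + 1) ^ 2 * y₁ ^ 2 := by rw [← mul_pow, h1]; ring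
      _ ≤ c * P ^ 2 * y₁ ^ 2 := by gcongr
      _ = c * (P ^ 2 * y₁ ^ 2) := by ring
    linarith [le_of_mul_le_mul_left this hc]

theorem sq_prod_le_sq_centralProd_mul_sq_eval_of_isRoot {n k : ℕ} (hk : k < n) {ω : ℝ}
    (hω : 0 ≤ ω) (hroot : (derivative^[k + 1] (T ℝ n)).eval ω = 0) :
    (∏ l ∈ range k, ((n : ℝ) ^ 2 - l ^ 2)) ^ 2 ≤
      centralProd n k ^ 2 * (derivative^[k] (T ℝ n)).eval ω ^ 2 := by
  have hc : 0 < (n : ℝ) ^ 2 - k ^ 2 := sub_pos.2 (by gcongr)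
  have hmono := monotoneOn_sonin (p := derivative^[k] (T ℝ n)) (a := 2 * k + 1)
    (c := (n : ℝ) ^ 2 - k ^ 2) (by linarith [k.cast_nonneg (α := ℝ)]) fun x ↦ by
      have h := one_sub_X_sq_mul_iterate_derivative_T_eval (R := ℝ) n k x
      rw [Function.iterate_succ_apply', Function.iterate_succ_apply'] at h
      exact_mod_cast h
  have hsoninω : sonin ((n : ℝ) ^ 2 - k ^ 2) (derivative^[k] (T ℝ n)) ω =
      ((n : ℝ) ^ 2 - k ^ 2) * (derivative^[k] (T ℝ n)).eval ω ^ 2 := by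
    rw [sonin, ← Function.iterate_succ_apply' derivative, hroot]
    ring
  refine le_of_mul_le_mul_left ?_ hc
  calc _ ≤ centralProd n k ^ 2 * sonin ((n : ℝ) ^ 2 - k ^ 2) (derivative^[k] (T ℝ n)) 0 :=
        mul_sq_prod_le_sq_centralProd_mul_sonin_zero hk
    _ ≤ centralProd n k ^ 2 * sonin ((n : ℝ) ^ 2 - k ^ 2) (derivative^[k] (T ℝ n)) ω := by
        gcongr
        exact hmono self_mem_Ici hω hω
    _ = _ := by rw [hsoninω]; ring

theorem stmt5_general (n k : ℕ) (hn : k + 1 < n) (ω : ℝ)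
    (hωroot : (derivative^[k + 1] (Chebyshev.T ℝ (n : ℤ))).eval ω = 0)
    (hωmax : ∀ x : ℝ, (derivative^[k + 1] (Chebyshev.T ℝ (n : ℤ))).eval x = 0 → x ≤ ω) :
    oddDoubleFac k / (∏ j ∈ Finset.Icc 1 k, ((n : ℝ) + (k : ℝ) + 1 - 2 * (j : ℝ))) ≤
      |(derivative^[k] (Chebyshev.T ℝ (n : ℤ))).eval ω| /
        (derivative^[k] (Chebyshev.T ℝ (n : ℤ))).eval 1 := by
  have hk : k < n := by omega
  have hω : 0 ≤ ω := by
    have := hωmax (-ω) (by rw [iterate_derivative_T_real_eval_neg, hωroot, mul_zero])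
    linarith
  have hP : 0 < centralProd n k := centralProd_pos (by exact_mod_cast hk.trans (lt_add_one n))
  have hA : 0 < ∏ l ∈ range k, ((n : ℝ) ^ 2 - l ^ 2) := prod_pos fun l hl ↦
    sub_pos.2 (by gcongr; exact_mod_cast (mem_range.mp hl).trans hk)
  have hone := iterate_derivative_T_eval_one (R := ℝ) n k
  push_cast at hone
  have hy₁ := pos_of_mul_pos_right (hone ▸ hA) (prod_pos fun j _ ↦ by positivity).le
  have hbound : ∏ l ∈ range k, ((n : ℝ) ^ 2 - l ^ 2) ≤
      centralProd n k * |(derivative^[k] (T ℝ n)).eval ω| :=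
    (sq_le_sq₀ hA.le (by positivity)).mp <| by
      rw [mul_pow, sq_abs]; exact sq_prod_le_sq_centralProd_mul_sq_eval_of_isRoot hk hω hωroot
  rw [prod_Icc_eq_centralProd, div_le_div_iff₀ hP hy₁, oddDoubleFac, hone]
  linarith

theorem stmt5 (n k : ℕ) (hk : 1 ≤ k) (hn : k + 1 < n) (ω : ℝ)
    (hωroot : (derivative^[k + 1] (Chebyshev.T ℝ (n : ℤ))).eval ω = 0)
    (hωmax : ∀ x : ℝ, (derivative^[k + 1] (Chebyshev.T ℝ (n : ℤ))).eval x = 0 → x ≤ ω) :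
    oddDoubleFac k / (∏ j ∈ Finset.Icc 1 k, ((n : ℝ) + (k : ℝ) + 1 - 2 * (j : ℝ))) ≤
      |(derivative^[k] (Chebyshev.T ℝ (n : ℤ))).eval ω| /
        (derivative^[k] (Chebyshev.T ℝ (n : ℤ))).eval 1 :=
  stmt5_general n k hn ω hωroot hωmax
end

section
/- Let k ≥ 1 and let P(x) = Σ_{m=0}^{k} a_m x^m and Q(x) = Σ_{m=0}^{k} b_m x^m be real polynomials with b_m > 0 for all 0 ≤ m ≤ k, a_m > 0 for all 0 ≤ m ≤ k-1, and a_k ≥ 0. If the sequence (a_m/b_m)_{m=0}^{k} is strictly increasing, then the rational function R(x) = P(x)/Q(x) is strictly increasing on [0, ∞); if the sequence (a_m/b_m)_{m=0}^{k} is strictly decreasing, then R is strictly decreasing on [0, ∞). -/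
open Finset

lemma ratio_chain (k : ℕ) (r : ℕ → ℝ) (h : ∀ m, m < k → r m < r (m+1)) :
    ∀ m n, m < n → n ≤ k → r m < r n := by
  intro m n hmn hnk
  induction n with
  | zero => omega
  | succ n ih =>
    rcases Nat.lt_succ_iff_lt_or_eq.mp hmn with h' | h'
    · exact (ih h' (by omega)).trans (h n (by omega))
    · subst h'; exact h m (by omega)

lemma pow_cross (x y : ℝ) (hx : 0 ≤ x) (hxy : x ≤ y) {m n : ℕ} (hmn : m ≤ n) :
    y ^ m * x ^ n ≤ x ^ m * y ^ n := by
  have hy : 0 ≤ y := hx.trans hxy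
  obtain ⟨d, rfl⟩ := Nat.exists_eq_add_of_le hmn
  calc y ^ m * x ^ (m + d) = (x ^ m * y ^ m) * x ^ d := by rw [pow_add]; ring
    _ ≤ (x ^ m * y ^ m) * y ^ d := by
        apply mul_le_mul_of_nonneg_left (pow_le_pow_left₀ hx hxy d)
        positivity
    _ = x ^ m * y ^ (m + d) := by rw [pow_add]; ring

lemma key (k : ℕ) (hk : 1 ≤ k) (a b : ℕ → ℝ) (x y : ℝ) (hx : 0 ≤ x) (hxy : x < y)
    (hab : ∀ m n, m < n → n ≤ k → a m * b n < a n * b m) :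
    (∑ m ∈ range (k+1), a m * x ^ m) * (∑ m ∈ range (k+1), b m * y ^ m) <
    (∑ m ∈ range (k+1), a m * y ^ m) * (∑ m ∈ range (k+1), b m * x ^ m) := by
  set s := range (k+1) with hs
  have hmem : ∀ p : ℕ × ℕ, p ∈ s ×ˢ s → p.1 ≤ k ∧ p.2 ≤ k := by
    intro p hp
    rw [Finset.mem_product, hs, mem_range, mem_range] at hp
    omega
  set h : ℕ × ℕ → ℝ := fun p =>
    (a p.1 * b p.2 - a p.2 * b p.1) * (y ^ p.1 * x ^ p.2 - x ^ p.1 * y ^ p.2) with hh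
  have hpos : 0 < ∑ p ∈ s ×ˢ s, h p := by
    apply Finset.sum_pos'
    · intro p hp
      obtain ⟨h1, h2⟩ := hmem p hp
      simp only [hh]
      rcases lt_trichotomy p.1 p.2 with hlt | heq | hgt
      · have c1 : a p.1 * b p.2 - a p.2 * b p.1 < 0 := sub_neg.mpr (hab _ _ hlt h2)
        have c2 : y ^ p.1 * x ^ p.2 - x ^ p.1 * y ^ p.2 ≤ 0 :=
          sub_nonpos.mpr (pow_cross x y hx hxy.le hlt.le)
        nlinarith [mul_nonneg (neg_nonneg.mpr c1.le) (neg_nonneg.mpr c2)]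
      · simp [heq]
      · have c1 : 0 < a p.1 * b p.2 - a p.2 * b p.1 := sub_pos.mpr (hab _ _ hgt h1)
        have c2 : 0 ≤ y ^ p.1 * x ^ p.2 - x ^ p.1 * y ^ p.2 := by
          have := pow_cross x y hx hxy.le hgt.le
          nlinarith [this]
        exact mul_nonneg c1.le c2
    · refine ⟨(0, 1), ?_, ?_⟩
      · rw [Finset.mem_product, hs, mem_range, mem_range]; omega
      · have c1 : a 0 * b 1 - a 1 * b 0 < 0 := sub_neg.mpr (hab 0 1 one_pos hk)
        have c2 : y ^ 0 * x ^ 1 - x ^ 0 * y ^ 1 < 0 := by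
          simp only [pow_zero, pow_one, one_mul, mul_one]
          linarith
        simpa [hh] using mul_pos_of_neg_of_neg c1 c2
  have swap : ∀ F : ℕ → ℕ → ℝ,
      ∑ p ∈ s ×ˢ s, F p.1 p.2 = ∑ p ∈ s ×ˢ s, F p.2 p.1 := by
    intro F
    rw [Finset.sum_product]
    rw [Finset.sum_comm]
    rw [Finset.sum_product]
  have expand : ∑ p ∈ s ×ˢ s, h p =
      2 * ((∑ m ∈ s, a m * y ^ m) * (∑ m ∈ s, b m * x ^ m)
        - (∑ m ∈ s, a m * x ^ m) * (∑ m ∈ s, b m * y ^ m)) := by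
    have e1 : (∑ m ∈ s, a m * y ^ m) * (∑ m ∈ s, b m * x ^ m)
        = ∑ p ∈ s ×ˢ s, (a p.1 * y ^ p.1) * (b p.2 * x ^ p.2) := by
      rw [Finset.sum_mul_sum, Finset.sum_product]
    have e2 : (∑ m ∈ s, a m * x ^ m) * (∑ m ∈ s, b m * y ^ m)
        = ∑ p ∈ s ×ˢ s, (a p.1 * x ^ p.1) * (b p.2 * y ^ p.2) := by
      rw [Finset.sum_mul_sum, Finset.sum_product]
    have e3 : ∑ p ∈ s ×ˢ s, (a p.2 * b p.1) * (y ^ p.1 * x ^ p.2)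
        = ∑ p ∈ s ×ˢ s, (a p.1 * x ^ p.1) * (b p.2 * y ^ p.2) := by
      rw [swap (fun m n => (a n * b m) * (y ^ m * x ^ n))]
      exact Finset.sum_congr rfl (fun p _ => by ring)
    have e4 : ∑ p ∈ s ×ˢ s, (a p.2 * b p.1) * (x ^ p.1 * y ^ p.2)
        = ∑ p ∈ s ×ˢ s, (a p.1 * y ^ p.1) * (b p.2 * x ^ p.2) := by
      rw [swap (fun m n => (a n * b m) * (x ^ m * y ^ n))]
      exact Finset.sum_congr rfl (fun p _ => by ring)
    have : ∀ p : ℕ × ℕ, h p =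
        (a p.1 * y ^ p.1) * (b p.2 * x ^ p.2) - (a p.1 * x ^ p.1) * (b p.2 * y ^ p.2)
        - (a p.2 * b p.1) * (y ^ p.1 * x ^ p.2) + (a p.2 * b p.1) * (x ^ p.1 * y ^ p.2) := by
      intro p; simp only [hh]; ring
    rw [Finset.sum_congr rfl (fun p _ => this p)]
    simp only [Finset.sum_add_distrib, Finset.sum_sub_distrib]
    rw [e3, e4, ← e1, ← e2]
    ring
  rw [expand] at hpos
  linarith

lemma Qpos (k : ℕ) (b : ℕ → ℝ) (hb : ∀ m, m ≤ k → 0 < b m) (x : ℝ) (hx : 0 ≤ x) :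
    0 < ∑ m ∈ range (k+1), b m * x ^ m := by
  apply Finset.sum_pos'
  · intro i hi
    have : i ≤ k := by have := mem_range.mp hi; omega
    exact mul_nonneg (hb i this).le (pow_nonneg hx i)
  · exact ⟨0, mem_range.mpr (by omega), by simpa using hb 0 (by omega)⟩

theorem stmt6 (k : ℕ) (hk : 1 ≤ k) (a b : ℕ → ℝ)
    (hb : ∀ m, m ≤ k → 0 < b m)
    (ha : ∀ m, m ≤ k - 1 → 0 < a m)
    (hak : 0 ≤ a k) :
    ((∀ m, m < k → a m / b m < a (m + 1) / b (m + 1)) →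
      StrictMonoOn
        (fun x : ℝ => (∑ m ∈ Finset.range (k + 1), a m * x ^ m) /
          (∑ m ∈ Finset.range (k + 1), b m * x ^ m)) (Set.Ici 0)) ∧
    ((∀ m, m < k → a (m + 1) / b (m + 1) < a m / b m) →
      StrictAntiOn
        (fun x : ℝ => (∑ m ∈ Finset.range (k + 1), a m * x ^ m) /
          (∑ m ∈ Finset.range (k + 1), b m * x ^ m)) (Set.Ici 0)) := by
  constructor
  · intro hmono x hxmem y hymem hxy
    simp only [Set.mem_Ici] at hxmem hymem
    have qx := Qpos k b hb x hxmem
    have qy := Qpos k b hb y hymem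
    rw [div_lt_div_iff₀ qx qy]
    apply key k hk a b x y hxmem hxy
    intro m n hmn hnk
    have := ratio_chain k (fun m => a m / b m) hmono m n hmn hnk
    have hbm := hb m (by omega)
    have hbn := hb n hnk
    rw [div_lt_div_iff₀ hbm hbn] at this
    linarith
  · intro hanti x hxmem y hymem hxy
    simp only [Set.mem_Ici] at hxmem hymem
    have qx := Qpos k b hb x hxmem
    have qy := Qpos k b hb y hymem
    rw [div_lt_div_iff₀ qy qx]
    have := key k hk b a x y hxmem hxy ?_
    · linarith
    intro m n hmn hnk
    have hr := ratio_chain k (fun m => -(a m / b m)) (fun m hm => by simpa using hanti m hm) m n hmn hnk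
    simp only [neg_lt_neg_iff] at hr
    have hbm := hb m (by omega)
    have hbn := hb n hnk
    rw [div_lt_div_iff₀ hbn hbm] at hr
    linarith
end

section
/- Let m and k be integers with k ≥ 1 and m > k+1. Then S_{m,k}(0) = m · ((m+k-2)(m+k-4)⋯(m-k+2)) / ((m+k-1)(m+k-3)⋯(m-k+1)), where the numerator product is ∏_{j=1}^{k-1} (m+k-2j) and the denominator product is ∏_{j=1}^{k} (m+k+1-2j). -/
open Polynomial Finset

/-- The even double factorial `(2k)!! = 2·4⋯(2k)`. -/
noncomputable def evenDoubleFac (k : ℕ) : ℝ := ∏ j ∈ Finset.range k, (2 * (j : ℝ) + 2)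

/-- `S_{n,k}(x) = 1 + Σ_{m=1}^{k-1} ((2m-1)!!/(2m)!!) (k-m)_{2m} (1-x²)^{-m} ∏_{j=1}^m (n²-j²)⁻¹`. -/
noncomputable def S (n k : ℕ) (x : ℝ) : ℝ :=
  1 + ∑ m ∈ Finset.Icc 1 (k - 1),
    (oddDoubleFac m / evenDoubleFac m) *
      ((ascPochhammer ℝ (2 * m)).eval ((k : ℝ) - (m : ℝ))) *
      ((1 - x ^ 2) ^ m)⁻¹ *
      ∏ j ∈ Finset.Icc 1 m, ((n : ℝ) ^ 2 - (j : ℝ) ^ 2)⁻¹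

/-!
With `k = n + 1`, `S_{m,k}(0)` is the terminating Whipple sum `₃F₂(-n, n+1, 1/2; 1-m, 1+m; 1)`.
Clearing the denominator `∏_{j=1}^n (m² - j²)` turns it into the polynomial
`F_n(m) = ∑_{r ≤ n} c_{n,r} ∏_{j=r+1}^n (m² - j²)`, which satisfies `F_{n+1}(m) = (m - n)² F_n(m + 1)`:
the difference of the two sides telescopes termwise, with a Wilf–Zeilberger certificate.
Hence `F_n(m) = G_n(m)²` with `G_n(m) = (m+n-1)(m+n-3)⋯(m-n+1)`, and since
`G_n(m) G_{n+1}(m) = m ∏_{j=1}^n (m² - j²)`, the sum equals `m G_n(m) / G_{n+1}(m)`.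
-/

theorem ascPochhammer_eval_mul_add_one {R : Type*} [CommSemiring R] (n : ℕ) (x : R) :
    x * (ascPochhammer R n).eval (x + 1) = (ascPochhammer R n).eval x * (x + n) := by
  rw [← ascPochhammer_succ_eval, ascPochhammer_succ_left]
  simp

theorem ascPochhammer_eval_add_two {R : Type*} [CommSemiring R] (n : ℕ) (x : R) :
    (ascPochhammer R (n + 2)).eval x = x * (ascPochhammer R n).eval (x + 1) * (x + 1 + n) := by
  rw [ascPochhammer_succ_left]
  simp [ascPochhammer_succ_eval, mul_assoc]

theorem oddDoubleFac_div_evenDoubleFac_succ (r : ℕ) :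
    oddDoubleFac (r + 1) / evenDoubleFac (r + 1) * (2 * r + 2) =
      oddDoubleFac r / evenDoubleFac r * (2 * r + 1) := by
  have : evenDoubleFac r ≠ 0 := prod_ne_zero_iff.mpr fun j _ => by positivity
  simp only [oddDoubleFac, evenDoubleFac, prod_range_succ]
  field_simp

/-- Coefficient `r` of `S_{m,n+1}(0)`, indexed by `n = k - 1` to avoid truncated subtraction. -/
noncomputable def whippleCoeff (n r : ℕ) : ℝ :=
  oddDoubleFac r / evenDoubleFac r * (ascPochhammer ℝ (2 * r)).eval ((n : ℝ) + 1 - r)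

theorem whippleCoeff_zero (n : ℕ) : whippleCoeff n 0 = 1 := by
  simp [whippleCoeff, oddDoubleFac, evenDoubleFac]

theorem whippleCoeff_mul_add (n q : ℕ) :
    whippleCoeff n q * (n + 1 + q) = whippleCoeff (n + 1) q * (n + 1 - q) := by
  have h := ascPochhammer_eval_mul_add_one (2 * q) ((n : ℝ) + 1 - q)
  simp only [whippleCoeff]
  push_cast at h ⊢
  rw [show (n : ℝ) + 1 + 1 - q = n + 1 - q + 1 by ring]
  linear_combination (-(oddDoubleFac q / evenDoubleFac q)) * h

theorem whippleCoeff_succ (N q : ℕ) :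
    whippleCoeff N (q + 1) * (2 * q + 2) =
      whippleCoeff N q * ((2 * q + 1) * (N - q) * (N + q + 1)) := by
  have h := ascPochhammer_eval_add_two (2 * q) ((N : ℝ) - q)
  have hc := oddDoubleFac_div_evenDoubleFac_succ q
  simp only [whippleCoeff, show 2 * (q + 1) = 2 * q + 2 by ring]
  push_cast at h ⊢
  rw [show (N : ℝ) + 1 - (q + 1) = N - q by ring, h, show (N : ℝ) - q + 1 = N + 1 - q by ring]
  linear_combination
    ((N - q) * (ascPochhammer ℝ (2 * q)).eval ((N : ℝ) + 1 - q) * (N - q + 1 + 2 * q)) * hc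

theorem prod_Ioc_sq_sub_add_one_mul (x : ℝ) {q n : ℕ} (hqn : q ≤ n) :
    (∏ j ∈ Ioc q n, ((x + 1) ^ 2 - (j : ℝ) ^ 2)) * ((x - n) * (x - n - 1) * (x + q + 1)) =
      (∏ j ∈ Ioc q (n + 1), (x ^ 2 - (j : ℝ) ^ 2)) * (x - q) := by
  induction n, hqn using Nat.le_induction with
  | base =>
    rw [Ioc_self, prod_empty, Nat.Ioc_succ_singleton, prod_singleton]
    push_cast
    ring
  | succ n hqn ih =>
    rw [prod_Ioc_succ_top hqn, prod_Ioc_succ_top (by omega)]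
    push_cast
    linear_combination ((x + n + 2) * (x - n - 2)) * ih

noncomputable def whippleTerm (n r : ℕ) (x : ℝ) : ℝ :=
  whippleCoeff n r * ∏ j ∈ Ioc r n, (x ^ 2 - (j : ℝ) ^ 2)

theorem whippleTerm_add_one_mul {n q : ℕ} (hq : q ≤ n) (x : ℝ) :
    whippleTerm n q (x + 1) * ((n + 1 + q) * ((x - n) * (x - n - 1) * (x + q + 1))) =
      whippleTerm (n + 1) q x * ((n + 1 - q) * (x - q)) := by
  have hc := whippleCoeff_mul_add n q
  have hp := prod_Ioc_sq_sub_add_one_mul x hq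
  simp only [whippleTerm]
  linear_combination
    (∏ j ∈ Ioc q n, ((x + 1) ^ 2 - (j : ℝ) ^ 2)) * ((x - n) * (x - n - 1) * (x + q + 1)) *
        hc +
      whippleCoeff (n + 1) q * (n + 1 - q) * hp

theorem whippleTerm_succ {N q : ℕ} (hq : q < N) (x : ℝ) :
    whippleTerm N (q + 1) x * ((2 * q + 2) * ((x - q - 1) * (x + q + 1))) =
      whippleTerm N q x * ((2 * q + 1) * (N - q) * (N + q + 1)) := by
  have hc := whippleCoeff_succ N q
  have hp : ∏ j ∈ Ioc q N, (x ^ 2 - (j : ℝ) ^ 2) =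
      (x ^ 2 - (q + 1) ^ 2) * ∏ j ∈ Ioc (q + 1) N, (x ^ 2 - (j : ℝ) ^ 2) := by
    rw [← prod_Ioc_consecutive _ q.le_succ hq, Nat.Ioc_succ_singleton, prod_singleton]
    push_cast
    rfl
  simp only [whippleTerm, hp]
  linear_combination
    (x - q - 1) * (x + q + 1) * (∏ j ∈ Ioc (q + 1) N, (x ^ 2 - (j : ℝ) ^ 2)) * hc

noncomputable def wzCert (n : ℕ) (x : ℝ) (q : ℕ) : ℝ :=
  2 * q * (x - q) / ((x - n - 1) * (n + 1 + q)) * whippleTerm (n + 1) q x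

theorem whippleTerm_sub_eq_wzCert_sub {n q : ℕ} (hq : q ≤ n) {x : ℝ} (hx : n + 1 < x) :
    whippleTerm (n + 1) q x - (x - n) ^ 2 * whippleTerm n q (x + 1) =
      wzCert n x q - wzCert n x (q + 1) := by
  have hqx : (q : ℝ) + 1 < x := by
    have : (q : ℝ) ≤ n := by exact_mod_cast hq
    linarith
  have hA := whippleTerm_add_one_mul hq x
  have hB := whippleTerm_succ (N := n + 1) (show q < n + 1 by omega) x
  have hxn : x - n ≠ 0 := by linarith
  have hxn1 : x - n - 1 ≠ 0 := by linarith
  have hxq : x + q + 1 ≠ 0 := by linarith [(Nat.cast_nonneg q : (0 : ℝ) ≤ q)]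
  have hxq1 : x - q - 1 ≠ 0 := by linarith
  have hnq : (n : ℝ) + 1 + q ≠ 0 := by positivity
  have hq2 : (2 : ℝ) * q + 2 ≠ 0 := by positivity
  -- Both neighbouring terms are rational multiples of `whippleTerm (n + 1) q x`, so what remains
  -- is an identity of rational functions.
  rw [← eq_div_iff (by simp [*])] at hA
  rw [← eq_div_iff (by simp [*])] at hB
  simp only [wzCert, hA, hB]
  push_cast
  field_simp
  ring

noncomputable def whippleSum (n : ℕ) (x : ℝ) : ℝ := ∑ r ∈ range (n + 1), whippleTerm n r x

theorem whippleSum_succ {n : ℕ} {x : ℝ} (hx : n + 1 < x) :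
    whippleSum (n + 1) x = (x - n) ^ 2 * whippleSum n (x + 1) := by
  have htel : ∑ q ∈ range (n + 1),
      (whippleTerm (n + 1) q x - (x - n) ^ 2 * whippleTerm n q (x + 1)) =
        wzCert n x 0 - wzCert n x (n + 1) := by
    rw [← sum_range_sub']
    exact sum_congr rfl fun q hq =>
      whippleTerm_sub_eq_wzCert_sub (Nat.lt_succ_iff.mp (mem_range.mp hq)) hx
  have h0 : wzCert n x 0 = 0 := by simp [wzCert]
  have htop : wzCert n x (n + 1) = whippleTerm (n + 1) (n + 1) x := by
    have : x - n - 1 ≠ 0 := by linarith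
    rw [wzCert]
    push_cast
    field_simp
    ring
  rw [whippleSum, sum_range_succ, whippleSum, mul_sum, ← htop]
  rw [sum_sub_distrib, h0] at htel
  linarith

noncomputable def centeredProd (n : ℕ) (x : ℝ) : ℝ := ∏ j ∈ range n, (x + n - 1 - 2 * j)

theorem centeredProd_succ (n : ℕ) (x : ℝ) :
    centeredProd (n + 1) x = centeredProd n (x + 1) * (x - n) := by
  rw [centeredProd, prod_range_succ, centeredProd]
  push_cast
  congr 1
  · exact prod_congr rfl fun j _ => by ring
  · ring

theorem centeredProd_add_two (n : ℕ) (x : ℝ) :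
    centeredProd (n + 2) x = centeredProd n x * ((x + n + 1) * (x - n - 1)) := by
  rw [centeredProd, prod_range_succ, prod_range_succ', centeredProd]
  push_cast
  rw [prod_congr rfl fun (j : ℕ) _ =>
    show x + ((n : ℝ) + 2) - 1 - 2 * ((j : ℝ) + 1) = x + n - 1 - 2 * j by ring]
  ring

theorem centeredProd_mul_centeredProd_succ (n : ℕ) (x : ℝ) :
    centeredProd n x * centeredProd (n + 1) x = x * ∏ j ∈ Ioc 0 n, (x ^ 2 - (j : ℝ) ^ 2) := by
  induction n with
  | zero => simp [centeredProd]
  | succ n ih =>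
    rw [centeredProd_add_two, prod_Ioc_succ_top n.zero_le]
    push_cast
    linear_combination ((x + n + 1) * (x - n - 1)) * ih

theorem centeredProd_pos {n : ℕ} {x : ℝ} (hx : (n : ℝ) - 1 < x) : 0 < centeredProd n x :=
  prod_pos fun j hj => by
    have : (j : ℝ) + 1 ≤ n := by exact_mod_cast mem_range.mp hj
    linarith

theorem prod_Icc_eq_centeredProd (n : ℕ) (x : ℝ) :
    ∏ j ∈ Icc 1 n, (x + n + 1 - 2 * (j : ℝ)) = centeredProd n x := by
  rw [← Ico_add_one_right_eq_Icc, prod_Ico_eq_prod_range, centeredProd]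
  exact prod_congr rfl fun j _ => by push_cast; ring

theorem whippleSum_eq_sq (n : ℕ) (x : ℝ) (hx : n < x) :
    whippleSum n x = centeredProd n x ^ 2 := by
  induction n generalizing x with
  | zero => simp [whippleSum, whippleTerm, whippleCoeff_zero, centeredProd]
  | succ n ih =>
    push_cast at hx
    rw [whippleSum_succ hx, ih (x + 1) (by linarith), centeredProd_succ]
    ring

theorem prod_Ioc_sq_sub_pos {n : ℕ} {x : ℝ} (hx : n < x) :
    0 < ∏ j ∈ Ioc 0 n, (x ^ 2 - (j : ℝ) ^ 2) :=
  prod_pos fun j hj => by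
    have hj : (j : ℝ) ≤ n := by exact_mod_cast (mem_Ioc.mp hj).2
    have : (0 : ℝ) ≤ j := j.cast_nonneg
    nlinarith

theorem S_zero_mul_prod_eq_whippleSum {n m : ℕ} (hm : n < m) :
    S m (n + 1) 0 * ∏ j ∈ Ioc 0 n, ((m : ℝ) ^ 2 - (j : ℝ) ^ 2) = whippleSum n m := by
  have hS : S m (n + 1) 0 =
      ∑ r ∈ range (n + 1),
        whippleCoeff n r * (∏ j ∈ Ioc 0 r, ((m : ℝ) ^ 2 - (j : ℝ) ^ 2))⁻¹ := by
    have hIcc (a : ℕ) : Icc 1 a = Ioc 0 a := Icc_add_one_left_eq_Ioc 0 a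
    rw [Nat.range_succ_eq_Icc_zero, Icc_eq_cons_Ioc n.zero_le, sum_cons, whippleCoeff_zero, S]
    simp [hIcc, whippleCoeff]
  rw [hS, sum_mul, whippleSum]
  refine sum_congr rfl fun r hr => ?_
  have hrn : r ≤ n := Nat.lt_succ_iff.mp (mem_range.mp hr)
  have hpos := prod_Ioc_sq_sub_pos (x := (m : ℝ)) (n := r) (by exact_mod_cast hrn.trans_lt hm)
  rw [whippleTerm, ← prod_Ioc_consecutive _ r.zero_le hrn]
  field_simp

theorem stmt7 (m k : ℕ) (hk : 1 ≤ k) (hm : k + 1 < m) :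
    S m k 0 = (m : ℝ) *
      (∏ j ∈ Finset.Icc 1 (k - 1), ((m : ℝ) + (k : ℝ) - 2 * (j : ℝ))) /
      (∏ j ∈ Finset.Icc 1 k, ((m : ℝ) + (k : ℝ) + 1 - 2 * (j : ℝ))) := by
  obtain ⟨n, rfl⟩ : ∃ n, k = n + 1 := ⟨k - 1, by omega⟩
  have hnm : (n : ℝ) + 2 < m := by exact_mod_cast hm
  have hnum : ∏ j ∈ Icc 1 (n + 1 - 1), ((m : ℝ) + ↑(n + 1) - 2 * j) = centeredProd n m := by
    rw [Nat.add_sub_cancel, ← prod_Icc_eq_centeredProd]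
    push_cast
    exact prod_congr rfl fun j _ => by ring
  rw [prod_Icc_eq_centeredProd, hnum, eq_div_iff (centeredProd_pos (by push_cast; linarith)).ne']
  have hG := centeredProd_pos (n := n) (x := m) (by linarith)
  have hP := prod_Ioc_sq_sub_pos (n := n) (x := (m : ℝ)) (by linarith)
  have hSP := S_zero_mul_prod_eq_whippleSum (n := n) (m := m) (by omega)
  rw [whippleSum_eq_sq n m (by linarith)] at hSP
  have hGG := centeredProd_mul_centeredProd_succ n m
  refine mul_left_cancel₀ (mul_pos hG hP).ne' ?_
  linear_combination (centeredProd n m * centeredProd (n + 1) m) * hSP + centeredProd n m ^ 2 * hGG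
end

section
/- Let m and k be integers with k ≥ 1 and m > k+1. Then S_{m,k+1}(0) = m · ((m+k-1)(m+k-3)⋯(m-k+1)) / ((m+k)(m+k-2)⋯(m-k)), where the numerator product is ∏_{j=1}^{k} (m+k+1-2j) and the denominator product is ∏_{j=0}^{k} (m+k-2j). -/
open Polynomial Finset

/-!
At `x = 0` the terms of `S_{m,k+1}` are `c_k(r) / ∏_{j=1}^{r} (m² - j²)` with
`c_K(r) = ((2r-1)!!/(2r)!!) (K+1-r)_{2r}`. The contiguous relation for the Pochhammer symbol gives
`c_{K+2}(r+1) - c_K(r+1) = ((K+2)² - r²) c_{K+2}(r) - ((K+1)² - r²) c_K(r)`, which makes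
`(m² - (k+2)²) S_{m,k+3}(0) - (m² - (k+1)²) S_{m,k+1}(0)` telescope to zero. The closed form
satisfies the same two-step recurrence, and the cases `k = 0, 1` are checked directly.
-/

lemma ascPochhammer_two_eval_mul_eval_add_two {R : Type*} [CommSemiring R] (n : ℕ) (y : R) :
    (ascPochhammer R 2).eval y * (ascPochhammer R n).eval (y + 2) =
      (ascPochhammer R n).eval y * (ascPochhammer R 2).eval (y + n) := by
  have h₁ := congrArg (eval y) (ascPochhammer_mul R 2 n)
  have h₂ := congrArg (eval y) (ascPochhammer_mul R n 2)
  simp only [eval_mul, eval_comp, eval_add, eval_X, eval_natCast] at h₁ h₂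
  rw [Nat.cast_ofNat] at h₁
  rw [h₁, h₂, add_comm]

lemma ascPochhammer_succ_succ_eval {R : Type*} [CommSemiring R] (n : ℕ) (y : R) :
    (ascPochhammer R (n + 2)).eval y = y * (ascPochhammer R n).eval (y + 1) * (y + 1 + n) := by
  rw [ascPochhammer_succ_left, eval_mul, eval_X, eval_comp, eval_add, eval_X, eval_one,
    ascPochhammer_succ_eval, mul_assoc]

noncomputable def sCoeff (K : ℝ) (r : ℕ) : ℝ :=
  oddDoubleFac r / evenDoubleFac r * (ascPochhammer ℝ (2 * r)).eval (K + 1 - r)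

namespace sCoeff

@[simp] lemma zero_right (K : ℝ) : sCoeff K 0 = 1 := by
  simp [sCoeff, oddDoubleFac, evenDoubleFac]

lemma succ_right (K : ℝ) (r : ℕ) :
    (2 * r + 2) * sCoeff K (r + 1) = (2 * r + 1) * ((K - r) * (K + 1 + r)) * sCoeff K r := by
  have hpoch := ascPochhammer_succ_succ_eval (R := ℝ) (2 * r) (K - r)
  rw [show K - r + 1 = K + 1 - r by ring, ← mul_add_one] at hpoch
  have hE : evenDoubleFac r ≠ 0 := prod_ne_zero_iff.2 fun j _ ↦ by positivity
  simp only [sCoeff, oddDoubleFac, evenDoubleFac, prod_range_succ, Nat.cast_add_one,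
    show K + 1 - (r + 1) = K - r by ring, hpoch]
  field_simp
  push_cast
  ring

lemma add_two_left (K : ℝ) (r : ℕ) :
    (K + 1 - r) * (K + 2 - r) * sCoeff (K + 2) r = (K + 1 + r) * (K + 2 + r) * sCoeff K r := by
  have h := ascPochhammer_two_eval_mul_eval_add_two (2 * r) (K + 1 - r)
  simp only [ascPochhammer_succ_succ_eval 0, ascPochhammer_zero, eval_one] at h
  simp only [sCoeff, show K + 2 + 1 - r = K + 1 - r + 2 by ring]
  push_cast at h
  linear_combination oddDoubleFac r / evenDoubleFac r * h

lemma add_two_left_sub_succ (K : ℝ) (r : ℕ) :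
    sCoeff (K + 2) (r + 1) - sCoeff K (r + 1) =
      ((K + 2) ^ 2 - r ^ 2) * sCoeff (K + 2) r - ((K + 1) ^ 2 - r ^ 2) * sCoeff K r := by
  apply mul_left_cancel₀ (by positivity : (2 * r + 2 : ℝ) ≠ 0)
  linear_combination succ_right (K + 2) r - succ_right K r - add_two_left K r

/-- `k + 1 - r = -(r - k - 1)` is one of the roots `0, -1, …, -(2r-1)` of `(·)_{2r}`. -/
lemma natCast_eq_zero_of_lt {k r : ℕ} (h : k < r) : sCoeff k r = 0 := by
  have hroot := ascPochhammer_eval_neg_coe_nat_of_lt (R := ℝ) (show r - (k + 1) < 2 * r by omega)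
  rw [Nat.cast_sub (by omega), Nat.cast_add_one, neg_sub] at hroot
  rw [sCoeff, hroot, mul_zero]

end sCoeff

noncomputable def sqDiffProd (m r : ℕ) : ℝ := ∏ j ∈ Icc 1 r, ((m : ℝ) ^ 2 - (j : ℝ) ^ 2)

namespace sqDiffProd

@[simp] lemma zero_right (m : ℕ) : sqDiffProd m 0 = 1 := by simp [sqDiffProd]

lemma succ_right (m r : ℕ) : sqDiffProd m (r + 1) = sqDiffProd m r * (m ^ 2 - (r + 1) ^ 2) := by
  rw [sqDiffProd, prod_Icc_succ_top (by omega), Nat.cast_add_one, sqDiffProd]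

lemma ne_zero {m r : ℕ} (h : r < m) : sqDiffProd m r ≠ 0 :=
  prod_ne_zero_iff.2 fun j hj ↦ by
    have : (j : ℝ) < m := by exact_mod_cast (mem_Icc.1 hj).2.trans_lt h
    nlinarith [(Nat.cast_nonneg j : (0 : ℝ) ≤ j)]

end sqDiffProd

lemma sCoeff_div_sqDiffProd_telescope (K : ℝ) {m r : ℕ} (h : r + 1 < m) :
    ((m ^ 2 - (K + 2) ^ 2) * sCoeff (K + 2) (r + 1) - (m ^ 2 - (K + 1) ^ 2) * sCoeff K (r + 1)) /
        sqDiffProd m (r + 1) =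
      (sCoeff (K + 2) (r + 1) - sCoeff K (r + 1)) / sqDiffProd m r -
        (sCoeff (K + 2) (r + 2) - sCoeff K (r + 2)) / sqDiffProd m (r + 1) := by
  have hr : (m : ℝ) ^ 2 - (r + 1) ^ 2 ≠ 0 := by
    have : (r + 1 : ℝ) < m := by exact_mod_cast h
    nlinarith
  rw [sCoeff.add_two_left_sub_succ K (r + 1), sqDiffProd.succ_right]
  field_simp [sqDiffProd.ne_zero (show r < m by omega)]
  push_cast
  ring

noncomputable def sPartial (m k : ℕ) : ℝ := ∑ r ∈ range (k + 1), sCoeff k r / sqDiffProd m r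

lemma sPartial_add_two {m k : ℕ} (hm : k + 2 < m) :
    (m ^ 2 - (k + 2) ^ 2) * sPartial m (k + 2) = (m ^ 2 - (k + 1) ^ 2) * sPartial m k := by
  have hK : ((k + 2 : ℕ) : ℝ) = k + 2 := by push_cast; rfl
  have hvanish : sCoeff k (k + 3) = 0 := sCoeff.natCast_eq_zero_of_lt (by omega)
  have hvanish' : sCoeff (k + 2) (k + 3) = 0 := hK ▸ sCoeff.natCast_eq_zero_of_lt (by omega)
  have hextend : sPartial m k = ∑ r ∈ range (k + 3), sCoeff k r / sqDiffProd m r := by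
    rw [sum_range_succ, sum_range_succ, sCoeff.natCast_eq_zero_of_lt (show k < k + 1 by omega),
      sCoeff.natCast_eq_zero_of_lt (show k < k + 2 by omega), sPartial]
    simp
  have hfirst := sCoeff.add_two_left_sub_succ k 0
  simp only [sCoeff.zero_right, CharP.cast_eq_zero] at hfirst
  rw [hextend, sPartial, hK, mul_sum, mul_sum, ← sub_eq_zero, ← sum_sub_distrib]
  simp_rw [← mul_div_assoc, ← sub_div]
  rw [sum_range_succ', sum_congr rfl fun r hr ↦ sCoeff_div_sqDiffProd_telescope k
    (show r + 1 < m by simp at hr; omega), sum_range_sub', hvanish, hvanish']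
  simp only [sCoeff.zero_right, sqDiffProd.zero_right, zero_add]
  linear_combination hfirst

lemma prod_Icc_one_eq_prod_range {M : Type*} [CommMonoid M] (n : ℕ) (f : ℕ → M) :
    ∏ j ∈ Icc 1 n, f j = ∏ i ∈ range n, f (i + 1) := by
  rw [← Ico_add_one_right_eq_Icc, prod_Ico_eq_prod_range, Nat.add_sub_cancel]
  simp only [add_comm]

noncomputable def sClosedForm (m k : ℕ) : ℝ :=
  m * (∏ j ∈ Icc 1 k, ((m : ℝ) + k + 1 - 2 * j)) /
    ∏ j ∈ range (k + 1), ((m : ℝ) + k - 2 * j)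

lemma sClosedForm_add_two {m k : ℕ} (hm : k + 2 < m) :
    (m ^ 2 - (k + 2) ^ 2) * sClosedForm m (k + 2) = (m ^ 2 - (k + 1) ^ 2) * sClosedForm m k := by
  have hnum : ∏ j ∈ Icc 1 (k + 2), ((m : ℝ) + (k + 2 : ℕ) + 1 - 2 * j) =
      (m + k + 1) * (m - k - 1) * ∏ j ∈ Icc 1 k, ((m : ℝ) + k + 1 - 2 * j) := by
    simp only [prod_Icc_one_eq_prod_range, prod_range_succ, prod_range_succ' _ k]
    push_cast
    ring_nf
  have hden : ∏ j ∈ range (k + 2 + 1), ((m : ℝ) + (k + 2 : ℕ) - 2 * j) =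
      (m + k + 2) * (m - k - 2) * ∏ j ∈ range (k + 1), ((m : ℝ) + k - 2 * j) := by
    rw [prod_range_succ, prod_range_succ']
    push_cast
    ring_nf
  have hM : (k + 2 : ℝ) < m := by exact_mod_cast hm
  have hden_ne : ∏ j ∈ range (k + 1), ((m : ℝ) + k - 2 * j) ≠ 0 :=
    prod_ne_zero_iff.2 fun j hj ↦ by
      have : (j : ℝ) ≤ k := by exact_mod_cast mem_range_succ_iff.1 hj
      linarith
  rw [sClosedForm, sClosedForm, hnum, hden]
  field_simp [show (m : ℝ) - k - 2 ≠ 0 by linarith]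
  ring

lemma sPartial_eq_sClosedForm {m k : ℕ} (hm : k + 1 < m) : sPartial m k = sClosedForm m k := by
  induction k using Nat.twoStepInduction with
  | zero =>
    have : (m : ℝ) ≠ 0 := by positivity
    simp [sPartial, sClosedForm, this]
  | one =>
    have hM : (2 : ℝ) < m := by exact_mod_cast hm
    have hcoeff : sCoeff 1 1 = 1 := by
      norm_num [sCoeff, oddDoubleFac, evenDoubleFac, ascPochhammer_succ_succ_eval 0]
    simp only [sPartial, sClosedForm, sum_range_succ, prod_range_succ, Icc_self, prod_singleton,
      range_one, sum_singleton, Nat.cast_one, Nat.cast_zero, hcoeff, sCoeff.zero_right,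
      sqDiffProd.succ_right, sqDiffProd.zero_right]
    rw [div_add_div _ _ one_ne_zero (by nlinarith), div_eq_div_iff (by nlinarith) (by nlinarith)]
    ring
  | more k ih _ =>
    have hM : (k + 2 : ℝ) < m := by exact_mod_cast (show k + 2 < m by omega)
    apply mul_left_cancel₀ (show (m : ℝ) ^ 2 - (k + 2) ^ 2 ≠ 0 by nlinarith)
    rw [sPartial_add_two (by omega), sClosedForm_add_two (by omega), ih (by omega)]

lemma S_zero_eq_sPartial (m k : ℕ) : S m (k + 1) 0 = sPartial m k := by
  rw [sPartial, range_eq_Ico, sum_eq_sum_Ico_succ_bot (by omega : 0 < k + 1), zero_add,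
    Ico_add_one_right_eq_Icc, S, Nat.add_sub_cancel, sCoeff.zero_right, sqDiffProd.zero_right,
    div_one]
  refine congrArg _ (sum_congr rfl fun r _ ↦ ?_)
  rw [sCoeff, sqDiffProd, prod_inv_distrib]
  push_cast
  ring

theorem stmt8_general (m k : ℕ) (hm : k + 1 < m) :
    S m (k + 1) 0 = (m : ℝ) *
      (∏ j ∈ Finset.Icc 1 k, ((m : ℝ) + (k : ℝ) + 1 - 2 * (j : ℝ))) /
      (∏ j ∈ Finset.range (k + 1), ((m : ℝ) + (k : ℝ) - 2 * (j : ℝ))) := by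
  rw [S_zero_eq_sPartial, sPartial_eq_sClosedForm hm, sClosedForm]

theorem stmt8 (m k : ℕ) (hk : 1 ≤ k) (hm : k + 1 < m) :
    S m (k + 1) 0 = (m : ℝ) *
      (∏ j ∈ Finset.Icc 1 k, ((m : ℝ) + (k : ℝ) + 1 - 2 * (j : ℝ))) /
      (∏ j ∈ Finset.range (k + 1), ((m : ℝ) + (k : ℝ) - 2 * (j : ℝ))) :=
  stmt8_general m k hm
end

section
/- Let n and k be integers with k ≥ 1 and n > k+1. Then the function x ↦ S_{n,k}(x)/S_{n,k+1}(x) is monotonically decreasing on [0, 1); in particular, for every x ∈ [0, 1), S_{n,k}(x)/S_{n,k+1}(x) ≤ S_{n,k}(0)/S_{n,k+1}(0). -/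
open Polynomial Finset

/- ### Auxiliary lemmas on the Pochhammer symbol -/

lemma poch_eval_prod (N : ℕ) (x : ℝ) :
    (ascPochhammer ℝ N).eval x = ∏ r ∈ Finset.range N, (x + r) := by
  induction N with
  | zero => simp
  | succ N ih => rw [ascPochhammer_succ_eval, ih, Finset.prod_range_succ]

lemma poch_nonneg {N : ℕ} {x : ℝ} (hx : 0 ≤ x) : 0 ≤ (ascPochhammer ℝ N).eval x := by
  rw [poch_eval_prod]
  exact Finset.prod_nonneg fun r _ => by positivity

lemma poch_pos {N : ℕ} {x : ℝ} (hx : 0 < x) : 0 < (ascPochhammer ℝ N).eval x := by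
  rw [poch_eval_prod]
  exact Finset.prod_pos fun r _ => by positivity

lemma poch_mono {N : ℕ} {x y : ℝ} (hx : 0 ≤ x) (hxy : x ≤ y) :
    (ascPochhammer ℝ N).eval x ≤ (ascPochhammer ℝ N).eval y := by
  rw [poch_eval_prod, poch_eval_prod]
  exact Finset.prod_le_prod (fun r _ => by positivity) (fun r _ => by linarith)

lemma poch_shift (N : ℕ) (x : ℝ) :
    (ascPochhammer ℝ N).eval x * (x + N) = x * (ascPochhammer ℝ N).eval (x + 1) := by
  simp only [poch_eval_prod]
  rw [← Finset.prod_range_succ (fun r => x + r) N, Finset.prod_range_succ']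
  simp only [Nat.cast_zero, add_zero]
  rw [mul_comm]
  congr 1
  apply Finset.prod_congr rfl
  intro r _
  push_cast
  ring

/-- The crucial cross inequality for Pochhammer values. -/
lemma poch_cross {k i j : ℕ} (hi : 1 ≤ i) (hij : i ≤ j) (hjk : j ≤ k) :
    (ascPochhammer ℝ (2 * j)).eval ((k : ℝ) - j) *
        (ascPochhammer ℝ (2 * i)).eval ((k : ℝ) + 1 - i) ≤
      (ascPochhammer ℝ (2 * i)).eval ((k : ℝ) - i) *
        (ascPochhammer ℝ (2 * j)).eval ((k : ℝ) + 1 - j) := by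
  have hiR : (1 : ℝ) ≤ i := by exact_mod_cast hi
  have hijR : (i : ℝ) ≤ j := by exact_mod_cast hij
  have hjkR : (j : ℝ) ≤ k := by exact_mod_cast hjk
  have hk0 : (0 : ℝ) ≤ k := Nat.cast_nonneg k
  set pI := (ascPochhammer ℝ (2 * i)).eval ((k : ℝ) - i) with hpI
  set pJ := (ascPochhammer ℝ (2 * j)).eval ((k : ℝ) - j) with hpJ
  set qI := (ascPochhammer ℝ (2 * i)).eval ((k : ℝ) + 1 - i) with hqI
  set qJ := (ascPochhammer ℝ (2 * j)).eval ((k : ℝ) + 1 - j) with hqJ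
  have hqI0 : 0 < qI := by rw [hqI]; exact poch_pos (by linarith)
  have hqJ0 : 0 < qJ := by rw [hqJ]; exact poch_pos (by linarith)
  have h1 : pI * ((k : ℝ) + i) = ((k : ℝ) - i) * qI := by
    have h := poch_shift (2 * i) ((k : ℝ) - i)
    have e : (k : ℝ) - i + 1 = (k : ℝ) + 1 - i := by ring
    rw [e] at h
    push_cast at h
    rw [hpI, hqI]
    linear_combination h
  have h2 : pJ * ((k : ℝ) + j) = ((k : ℝ) - j) * qJ := by
    have h := poch_shift (2 * j) ((k : ℝ) - j)
    have e : (k : ℝ) - j + 1 = (k : ℝ) + 1 - j := by ring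
    rw [e] at h
    push_cast at h
    rw [hpJ, hqJ]
    linear_combination h
  have iden : (pI * qJ - pJ * qI) * (((k : ℝ) + i) * ((k : ℝ) + j)) =
      (qI * qJ) * (2 * (k : ℝ) * ((j : ℝ) - (i : ℝ))) := by
    linear_combination ((k : ℝ) + (j : ℝ)) * qJ * h1 - ((k : ℝ) + (i : ℝ)) * qI * h2
  have hki : (0 : ℝ) < (k : ℝ) + i := by linarith
  have hkj : (0 : ℝ) < (k : ℝ) + j := by linarith
  have hrhs : 0 ≤ (qI * qJ) * (2 * (k : ℝ) * ((j : ℝ) - (i : ℝ))) := by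
    apply mul_nonneg (mul_pos hqI0 hqJ0).le
    apply mul_nonneg (by linarith) (by linarith)
  nlinarith [iden, hrhs, mul_pos hki hkj]

/- ### The coefficients of `S` as a "polynomial" in `(1-x²)⁻¹` -/

/-- The coefficient of `((1-x²)⁻¹)^m` in `S n k`. -/
noncomputable def coefS (n k m : ℕ) : ℝ :=
  (oddDoubleFac m / evenDoubleFac m) *
    ((ascPochhammer ℝ (2 * m)).eval ((k : ℝ) - (m : ℝ))) *
    ∏ j ∈ Finset.Icc 1 m, ((n : ℝ) ^ 2 - (j : ℝ) ^ 2)⁻¹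

lemma oddDoubleFac_pos (m : ℕ) : 0 < oddDoubleFac m :=
  Finset.prod_pos fun j _ => by positivity

lemma evenDoubleFac_pos (m : ℕ) : 0 < evenDoubleFac m :=
  Finset.prod_pos fun j _ => by positivity

lemma prodInv_pos {n m : ℕ} (h : m < n) :
    0 < ∏ j ∈ Finset.Icc 1 m, ((n : ℝ) ^ 2 - (j : ℝ) ^ 2)⁻¹ := by
  apply Finset.prod_pos
  intro j hj
  have hj2 : j ≤ m := (Finset.mem_Icc.mp hj).2
  have hjn : (j : ℝ) < n := by exact_mod_cast lt_of_le_of_lt hj2 h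
  have hj0 : (0 : ℝ) ≤ j := Nat.cast_nonneg j
  have : (j : ℝ) ^ 2 < (n : ℝ) ^ 2 := by nlinarith
  exact inv_pos.mpr (by linarith)

lemma coefS_nonneg {n k m : ℕ} (hm : m ≤ k) (hkn : k < n) : 0 ≤ coefS n k m := by
  unfold coefS
  apply mul_nonneg (mul_nonneg _ _) (prodInv_pos (lt_of_le_of_lt hm hkn)).le
  · exact (div_pos (oddDoubleFac_pos m) (evenDoubleFac_pos m)).le
  · apply poch_nonneg
    have : (m : ℝ) ≤ k := by exact_mod_cast hm
    linarith

lemma coefS_mono {n k m : ℕ} (hm : m ≤ k) (hkn : k < n) :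
    coefS n k m ≤ coefS n (k + 1) m := by
  unfold coefS
  push_cast
  have hmk : (m : ℝ) ≤ k := by exact_mod_cast hm
  have h := poch_mono (N := 2 * m) (x := (k : ℝ) - m) (y := (k : ℝ) + 1 - m)
    (by linarith) (by linarith)
  exact mul_le_mul_of_nonneg_right (mul_le_mul_of_nonneg_left h
    (div_pos (oddDoubleFac_pos m) (evenDoubleFac_pos m)).le)
    (prodInv_pos (lt_of_le_of_lt hm hkn)).le

lemma coefS_cross {n k i j : ℕ} (hi : 1 ≤ i) (hij : i ≤ j) (hjk : j ≤ k) (hkn : k < n) :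
    coefS n k j * coefS n (k + 1) i ≤ coefS n k i * coefS n (k + 1) j := by
  have key := poch_cross (k := k) hi hij hjk
  unfold coefS
  push_cast
  have hCi : (0 : ℝ) ≤ oddDoubleFac i / evenDoubleFac i :=
    (div_pos (oddDoubleFac_pos i) (evenDoubleFac_pos i)).le
  have hCj : (0 : ℝ) ≤ oddDoubleFac j / evenDoubleFac j :=
    (div_pos (oddDoubleFac_pos j) (evenDoubleFac_pos j)).le
  have hPi : (0 : ℝ) ≤ ∏ l ∈ Finset.Icc 1 i, ((n : ℝ) ^ 2 - (l : ℝ) ^ 2)⁻¹ :=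
    (prodInv_pos (lt_of_le_of_lt (le_trans hij hjk) hkn)).le
  have hPj : (0 : ℝ) ≤ ∏ l ∈ Finset.Icc 1 j, ((n : ℝ) ^ 2 - (l : ℝ) ^ 2)⁻¹ :=
    (prodInv_pos (lt_of_le_of_lt hjk hkn)).le
  nlinarith [mul_le_mul_of_nonneg_left key
      (mul_nonneg (mul_nonneg hCi hPi) (mul_nonneg hCj hPj)),
    mul_nonneg hCi hPi, mul_nonneg hCj hPj]

/- ### Rewriting `S` -/

lemma S_eq (n k : ℕ) (hk : 1 ≤ k) (x : ℝ) :
    S n k x = 1 + ∑ m ∈ Finset.Icc 1 k, coefS n k m * ((1 - x ^ 2)⁻¹) ^ m := by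
  obtain ⟨k', rfl⟩ : ∃ k', k = k' + 1 := ⟨k - 1, by omega⟩
  rw [Finset.sum_Icc_succ_top (Nat.le_add_left 1 k')]
  have h0 : coefS n (k' + 1) (k' + 1) = 0 := by
    have e : ((k' + 1 : ℕ) : ℝ) - ((k' + 1 : ℕ) : ℝ) = 0 := by ring
    unfold coefS
    rw [e, ascPochhammer_ne_zero_eval_zero ℝ (by omega : 2 * (k' + 1) ≠ 0)]
    ring
  rw [h0, zero_mul, add_zero, S]
  simp only [Nat.add_sub_cancel]
  congr 1
  apply Finset.sum_congr rfl
  intro m hm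
  unfold coefS
  rw [inv_pow]
  ring

lemma S_eq' (n k : ℕ) (x : ℝ) :
    S n (k + 1) x = 1 + ∑ m ∈ Finset.Icc 1 k, coefS n (k + 1) m * ((1 - x ^ 2)⁻¹) ^ m := by
  rw [S]
  simp only [Nat.add_sub_cancel]
  congr 1
  apply Finset.sum_congr rfl
  intro m hm
  unfold coefS
  rw [inv_pow]
  ring

lemma S_pos_aux (n K k : ℕ) (hKk : ∀ m ∈ Finset.Icc 1 K, 0 ≤ coefS n k m) {u : ℝ}
    (hu : 0 ≤ u) : 0 < 1 + ∑ m ∈ Finset.Icc 1 K, coefS n k m * u ^ m := by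
  have : 0 ≤ ∑ m ∈ Finset.Icc 1 K, coefS n k m * u ^ m :=
    Finset.sum_nonneg fun m hm => mul_nonneg (hKk m hm) (pow_nonneg hu m)
  linarith

/- ### The power cross inequality -/

lemma pow_cross_s10 {s t : ℝ} (hs : 0 ≤ s) (hst : s ≤ t) {i j : ℕ} (hij : i ≤ j) :
    s ^ j * t ^ i ≤ s ^ i * t ^ j := by
  obtain ⟨d, rfl⟩ := Nat.exists_eq_add_of_le hij
  rw [pow_add, pow_add]
  have h1 : s ^ d ≤ t ^ d := pow_le_pow_left₀ hs hst d
  have h0 : 0 ≤ s ^ i * t ^ i :=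
    mul_nonneg (pow_nonneg hs i) (pow_nonneg (hs.trans hst) i)
  calc s ^ i * s ^ d * t ^ i = s ^ i * t ^ i * s ^ d := by ring
    _ ≤ s ^ i * t ^ i * t ^ d := mul_le_mul_of_nonneg_left h1 h0
    _ = s ^ i * (t ^ i * t ^ d) := by ring

/- ### The abstract key inequality -/

lemma key_ineq (J : Finset ℕ) (a b : ℕ → ℝ) {s t : ℝ} (hs : 0 < s) (hst : s ≤ t)
    (ha : ∀ m ∈ J, 0 ≤ a m) (hab : ∀ m ∈ J, a m ≤ b m)
    (hcross : ∀ i ∈ J, ∀ j ∈ J, i ≤ j → a j * b i ≤ a i * b j) :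
    (1 + ∑ m ∈ J, a m * t ^ m) * (1 + ∑ m ∈ J, b m * s ^ m) ≤
      (1 + ∑ m ∈ J, a m * s ^ m) * (1 + ∑ m ∈ J, b m * t ^ m) := by
  have hpow : ∀ m : ℕ, s ^ m ≤ t ^ m := fun m => pow_le_pow_left₀ hs.le hst m
  have h1 : 0 ≤ ∑ m ∈ J, (b m - a m) * (t ^ m - s ^ m) :=
    Finset.sum_nonneg fun m hm =>
      mul_nonneg (by linarith [hab m hm]) (by linarith [hpow m])
  set F : ℕ → ℕ → ℝ := fun i j => a i * b j * (s ^ i * t ^ j - t ^ i * s ^ j) with hF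
  have hG : ∀ i ∈ J, ∀ j ∈ J, 0 ≤ F i j + F j i := by
    intro i hi j hj
    have hij : F i j + F j i = (a i * b j - a j * b i) * (s ^ i * t ^ j - t ^ i * s ^ j) := by
      simp only [hF]; ring
    rw [hij]
    rcases le_total i j with h | h
    · exact mul_nonneg (by linarith [hcross i hi j hj h])
        (by linarith [pow_cross_s10 hs.le hst h])
    · have hx : a i * b j - a j * b i ≤ 0 := by linarith [hcross j hj i hi h]
      have hy : s ^ i * t ^ j - t ^ i * s ^ j ≤ 0 := by linarith [pow_cross_s10 hs.le hst h]
      nlinarith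
  have h2 : 0 ≤ ∑ i ∈ J, ∑ j ∈ J, F i j := by
    have hswap : ∑ i ∈ J, ∑ j ∈ J, F i j = ∑ i ∈ J, ∑ j ∈ J, F j i := Finset.sum_comm
    have hsum : 0 ≤ ∑ i ∈ J, ∑ j ∈ J, (F i j + F j i) :=
      Finset.sum_nonneg fun i hi => Finset.sum_nonneg fun j hj => hG i hi j hj
    simp only [Finset.sum_add_distrib] at hsum
    linarith
  have e1 : ∑ m ∈ J, (b m - a m) * (t ^ m - s ^ m) =
      (∑ m ∈ J, b m * t ^ m) - (∑ m ∈ J, b m * s ^ m) -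
        (∑ m ∈ J, a m * t ^ m) + (∑ m ∈ J, a m * s ^ m) := by
    rw [← Finset.sum_sub_distrib, ← Finset.sum_sub_distrib, ← Finset.sum_add_distrib]
    apply Finset.sum_congr rfl
    intro m _
    ring
  have e2 : ∑ i ∈ J, ∑ j ∈ J, F i j =
      (∑ m ∈ J, a m * s ^ m) * (∑ m ∈ J, b m * t ^ m) -
        (∑ m ∈ J, a m * t ^ m) * (∑ m ∈ J, b m * s ^ m) := by
    rw [Finset.sum_mul_sum, Finset.sum_mul_sum, ← Finset.sum_sub_distrib]
    apply Finset.sum_congr rfl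
    intro i _
    rw [← Finset.sum_sub_distrib]
    apply Finset.sum_congr rfl
    intro j _
    simp only [hF]
    ring
  rw [e1] at h1
  rw [e2] at h2
  nlinarith [h1, h2]

/- ### The main theorem -/

theorem stmt10 (n k : ℕ) (hk : 1 ≤ k) (hn : k + 1 < n) :
    AntitoneOn (fun x : ℝ => S n k x / S n (k + 1) x) (Set.Ico 0 1) ∧
    ∀ x ∈ Set.Ico (0 : ℝ) 1, S n k x / S n (k + 1) x ≤ S n k 0 / S n (k + 1) 0 := by
  have hkn : k < n := by omega
  have hnonneg : ∀ m ∈ Finset.Icc 1 k, 0 ≤ coefS n k m := fun m hm =>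
    coefS_nonneg (Finset.mem_Icc.mp hm).2 hkn
  have hnonneg' : ∀ m ∈ Finset.Icc 1 k, 0 ≤ coefS n (k + 1) m := fun m hm =>
    coefS_nonneg (by have := (Finset.mem_Icc.mp hm).2; omega) hn
  have hmono : AntitoneOn (fun x : ℝ => S n k x / S n (k + 1) x) (Set.Ico 0 1) := by
    intro x hx y hy hxy
    simp only
    obtain ⟨hx0, hx1⟩ := hx
    obtain ⟨hy0, hy1⟩ := hy
    have hx2 : (0 : ℝ) < 1 - x ^ 2 := by nlinarith
    have hy2 : (0 : ℝ) < 1 - y ^ 2 := by nlinarith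
    have hs : (0 : ℝ) < (1 - x ^ 2)⁻¹ := inv_pos.mpr hx2
    have hst : (1 - x ^ 2)⁻¹ ≤ (1 - y ^ 2)⁻¹ := by
      apply inv_anti₀ hy2
      nlinarith
    have hSx : 0 < S n (k + 1) x := by
      rw [S_eq' n k x]; exact S_pos_aux n k (k + 1) hnonneg' hs.le
    have hSy : 0 < S n (k + 1) y := by
      rw [S_eq' n k y]; exact S_pos_aux n k (k + 1) hnonneg' (by positivity)
    rw [div_le_div_iff₀ hSy hSx]
    rw [S_eq n k hk x, S_eq n k hk y, S_eq' n k x, S_eq' n k y]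
    exact key_ineq (Finset.Icc 1 k) (coefS n k) (coefS n (k + 1)) hs hst
      hnonneg
      (fun m hm => coefS_mono (Finset.mem_Icc.mp hm).2 hkn)
      (fun i hi j hj hij => coefS_cross (Finset.mem_Icc.mp hi).1 hij
        (Finset.mem_Icc.mp hj).2 hkn)
  refine ⟨hmono, fun x hx => ?_⟩
  exact hmono (Set.mem_Ico.mpr ⟨le_refl 0, one_pos⟩) hx hx.1
end

section
/- Let n and k be integers with k ≥ 1 and n > k+1. Then for every x ∈ [0, 1), S_{n+1,k+1}(x)/S_{n,k+1}(x) ≤ S_{n+1,k+1}(0)/S_{n,k+1}(0). -/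
open Polynomial Finset

/-- Key abstract inequality. -/
lemma key_ineq_s11 (M : Finset ℕ) (a b T : ℕ → ℝ)
    (ha : ∀ m ∈ M, 0 ≤ a m) (hb : ∀ m ∈ M, 0 ≤ b m)
    (hT1 : ∀ m ∈ M, 1 ≤ T m)
    (hab : ∀ m ∈ M, a m ≤ b m)
    (hcross : ∀ m ∈ M, ∀ l ∈ M, (a m * b l - a l * b m) * (T m - T l) ≤ 0) :
    (1 + ∑ m ∈ M, a m * T m) * (1 + ∑ m ∈ M, b m) ≤
      (1 + ∑ m ∈ M, a m) * (1 + ∑ m ∈ M, b m * T m) := by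
  have h1 : ∑ m ∈ M, a m * T m - ∑ m ∈ M, a m ≤
      ∑ m ∈ M, b m * T m - ∑ m ∈ M, b m := by
    rw [← Finset.sum_sub_distrib, ← Finset.sum_sub_distrib]
    apply Finset.sum_le_sum
    intro m hm
    have h := mul_le_mul_of_nonneg_right (hab m hm) (by linarith [hT1 m hm] : (0:ℝ) ≤ T m - 1)
    nlinarith [hT1 m hm, ha m hm, hab m hm]
  have h2 : (∑ m ∈ M, a m * T m) * (∑ m ∈ M, b m) ≤
      (∑ m ∈ M, a m) * (∑ m ∈ M, b m * T m) := by
    have hD : ∑ m ∈ M, ∑ l ∈ M, a m * b l * (T m - T l) ≤ 0 := by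
      have h2D : ∑ m ∈ M, ∑ l ∈ M, a m * b l * (T m - T l)
          + ∑ m ∈ M, ∑ l ∈ M, a m * b l * (T m - T l)
          = ∑ m ∈ M, ∑ l ∈ M, (a m * b l - a l * b m) * (T m - T l) := by
        have hswap : (∑ m ∈ M, ∑ l ∈ M, a m * b l * (T m - T l))
            = ∑ m ∈ M, ∑ l ∈ M, a l * b m * (T l - T m) := Finset.sum_comm
        nth_rewrite 2 [hswap]
        rw [← Finset.sum_add_distrib]
        apply Finset.sum_congr rfl
        intro m _
        rw [← Finset.sum_add_distrib]
        apply Finset.sum_congr rfl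
        intro l _
        ring
      have hle : ∑ m ∈ M, ∑ l ∈ M, (a m * b l - a l * b m) * (T m - T l) ≤ 0 :=
        Finset.sum_nonpos fun m hm => Finset.sum_nonpos fun l hl => hcross m hm l hl
      linarith
    have e1 : (∑ m ∈ M, a m * T m) * (∑ m ∈ M, b m)
        - (∑ m ∈ M, a m) * (∑ m ∈ M, b m * T m)
        = ∑ m ∈ M, ∑ l ∈ M, a m * b l * (T m - T l) := by
      rw [Finset.sum_mul_sum, Finset.sum_mul_sum, ← Finset.sum_sub_distrib]
      apply Finset.sum_congr rfl
      intro m _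
      rw [← Finset.sum_sub_distrib]
      apply Finset.sum_congr rfl
      intro l _
      ring
    linarith
  nlinarith [h1, h2]

theorem stmt11 (n k : ℕ) (hk : 1 ≤ k) (hn : k + 1 < n) :
    ∀ x ∈ Set.Ico (0 : ℝ) 1,
      S (n + 1) (k + 1) x / S n (k + 1) x ≤ S (n + 1) (k + 1) 0 / S n (k + 1) 0 := by
  intro x hx
  obtain ⟨hx0, hx1⟩ := hx
  set M : Finset ℕ := Finset.Icc 1 k with hM
  set A : ℕ → ℝ := fun m => (oddDoubleFac m / evenDoubleFac m) *
      ((ascPochhammer ℝ (2 * m)).eval (((k : ℝ) + 1) - (m : ℝ))) with hA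
  set P : ℕ → ℕ → ℝ := fun N m => ∏ j ∈ Finset.Icc 1 m, ((N : ℝ) ^ 2 - (j : ℝ) ^ 2)⁻¹ with hP
  have hSeq : ∀ (N : ℕ) (y : ℝ), S N (k + 1) y = 1 + ∑ m ∈ M,
      (A m * P N m) * ((1 - y ^ 2) ^ m)⁻¹ := by
    intro N y
    unfold S
    simp only [Nat.add_sub_cancel, Nat.cast_add, Nat.cast_one, hM, hA, hP]
    congr 1
    apply Finset.sum_congr rfl
    intro m _
    ring
  -- positivity of factors
  have hodd : ∀ m : ℕ, 0 < oddDoubleFac m := fun m =>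
    Finset.prod_pos fun j _ => by positivity
  have heven : ∀ m : ℕ, 0 < evenDoubleFac m := fun m =>
    Finset.prod_pos fun j _ => by positivity
  have hA0 : ∀ m ∈ M, 0 < A m := by
    intro m hm
    obtain ⟨hm1, hm2⟩ := Finset.mem_Icc.mp hm
    have hpoch : 0 < (ascPochhammer ℝ (2 * m)).eval (((k : ℝ) + 1) - (m : ℝ)) := by
      apply ascPochhammer_pos
      have : (m : ℝ) ≤ (k : ℝ) := Nat.cast_le.mpr hm2
      linarith
    exact mul_pos (div_pos (hodd m) (heven m)) hpoch
  have hPpos : ∀ (N : ℕ), k < N → ∀ m ≤ k, 0 < P N m := by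
    intro N hN m hm
    apply Finset.prod_pos
    intro j hj
    obtain ⟨hj1, hj2⟩ := Finset.mem_Icc.mp hj
    have hjN : (j : ℝ) < (N : ℝ) := Nat.cast_lt.mpr (lt_of_le_of_lt (hj2.trans hm) hN)
    have hj0 : (0 : ℝ) ≤ (j : ℝ) := Nat.cast_nonneg j
    rw [inv_pos]
    nlinarith
  have hkn : k < n := by omega
  have hkn1 : k < n + 1 := by omega
  -- 1 - x^2 facts
  have hx2 : 0 < 1 - x ^ 2 := by nlinarith
  have hx2' : 1 - x ^ 2 ≤ 1 := by nlinarith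
  have hT1 : ∀ m ∈ M, (1 : ℝ) ≤ ((1 - x ^ 2) ^ m)⁻¹ := by
    intro m _
    have h1 : 0 < (1 - x ^ 2) ^ m := pow_pos hx2 m
    have h2 : (1 - x ^ 2) ^ m ≤ 1 := pow_le_one₀ (le_of_lt hx2) hx2'
    exact (one_le_inv_iff₀).mpr ⟨h1, h2⟩
  have hTmono : ∀ m l : ℕ, m ≤ l → ((1 - x ^ 2) ^ m)⁻¹ ≤ ((1 - x ^ 2) ^ l)⁻¹ := by
    intro m l hml
    have h1 : 0 < (1 - x ^ 2) ^ l := pow_pos hx2 l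
    have h2 : (1 - x ^ 2) ^ l ≤ (1 - x ^ 2) ^ m :=
      pow_le_pow_of_le_one (le_of_lt hx2) hx2' hml
    exact inv_anti₀ h1 h2
  have hmemk : ∀ m ∈ M, m ≤ k := fun m hm => (Finset.mem_Icc.mp hm).2
  have ha0 : ∀ m ∈ M, 0 ≤ A m * P (n + 1) m := fun m hm =>
    le_of_lt (mul_pos (hA0 m hm) (hPpos (n + 1) hkn1 m (hmemk m hm)))
  have hb0 : ∀ m ∈ M, 0 ≤ A m * P n m := fun m hm =>
    le_of_lt (mul_pos (hA0 m hm) (hPpos n hkn m (hmemk m hm)))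
  have hPle : ∀ m ≤ k, P (n + 1) m ≤ P n m := by
    intro m hm
    apply Finset.prod_le_prod
    · intro j hj
      obtain ⟨hj1, hj2⟩ := Finset.mem_Icc.mp hj
      have hjN : (j : ℝ) < ((n + 1 : ℕ) : ℝ) := Nat.cast_lt.mpr (lt_of_le_of_lt (hj2.trans hm) hkn1)
      have hj0 : (0 : ℝ) ≤ (j : ℝ) := Nat.cast_nonneg j
      rw [inv_nonneg]
      nlinarith
    · intro j hj
      obtain ⟨hj1, hj2⟩ := Finset.mem_Icc.mp hj
      have hjn : (j : ℝ) < (n : ℝ) := Nat.cast_lt.mpr (lt_of_le_of_lt (hj2.trans hm) hkn)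
      have hj0 : (0 : ℝ) ≤ (j : ℝ) := Nat.cast_nonneg j
      apply inv_anti₀
      · nlinarith
      · push_cast
        nlinarith
  have hab : ∀ m ∈ M, A m * P (n + 1) m ≤ A m * P n m := fun m hm =>
    mul_le_mul_of_nonneg_left (hPle m (hmemk m hm)) (le_of_lt (hA0 m hm))
  -- the P cross inequality
  have hIoc : ∀ (N m : ℕ), P N m = ∏ j ∈ Finset.Ioc 0 m, ((N : ℝ) ^ 2 - (j : ℝ) ^ 2)⁻¹ := by
    intro N m
    rw [hP]
    congr 1
  have hPP : ∀ m l : ℕ, m ≤ l → l ≤ k → P (n + 1) l * P n m ≤ P (n + 1) m * P n l := by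
    intro m l hml hlk
    have hmk : m ≤ k := hml.trans hlk
    have hsplit : ∀ N : ℕ, P N l = P N m * ∏ j ∈ Finset.Ioc m l, ((N : ℝ) ^ 2 - (j : ℝ) ^ 2)⁻¹ := by
      intro N
      rw [hIoc, hIoc]
      exact (Finset.prod_Ioc_consecutive _ (Nat.zero_le m) hml).symm
    have hQ : (∏ j ∈ Finset.Ioc m l, (((n + 1 : ℕ) : ℝ) ^ 2 - (j : ℝ) ^ 2)⁻¹) ≤
        ∏ j ∈ Finset.Ioc m l, ((n : ℝ) ^ 2 - (j : ℝ) ^ 2)⁻¹ := by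
      apply Finset.prod_le_prod
      · intro j hj
        obtain ⟨hj1, hj2⟩ := Finset.mem_Ioc.mp hj
        have hjN : (j : ℝ) < ((n + 1 : ℕ) : ℝ) := Nat.cast_lt.mpr (lt_of_le_of_lt (hj2.trans hlk) hkn1)
        have hj0 : (0 : ℝ) ≤ (j : ℝ) := Nat.cast_nonneg j
        rw [inv_nonneg]
        nlinarith
      · intro j hj
        obtain ⟨hj1, hj2⟩ := Finset.mem_Ioc.mp hj
        have hjn : (j : ℝ) < (n : ℝ) := Nat.cast_lt.mpr (lt_of_le_of_lt (hj2.trans hlk) hkn)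
        have hj0 : (0 : ℝ) ≤ (j : ℝ) := Nat.cast_nonneg j
        apply inv_anti₀
        · nlinarith
        · push_cast
          nlinarith
    have h1 : 0 < P (n + 1) m := hPpos (n + 1) hkn1 m hmk
    have h2 : 0 < P n m := hPpos n hkn m hmk
    rw [hsplit (n + 1), hsplit n]
    set Q1 : ℝ := ∏ j ∈ Finset.Ioc m l, (((n + 1 : ℕ) : ℝ) ^ 2 - (j : ℝ) ^ 2)⁻¹ with hQ1
    set Q2 : ℝ := ∏ j ∈ Finset.Ioc m l, ((n : ℝ) ^ 2 - (j : ℝ) ^ 2)⁻¹ with hQ2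
    calc P (n + 1) m * Q1 * P n m = P (n + 1) m * P n m * Q1 := by ring
      _ ≤ P (n + 1) m * P n m * Q2 :=
          mul_le_mul_of_nonneg_left hQ (le_of_lt (mul_pos h1 h2))
      _ = P (n + 1) m * (P n m * Q2) := by ring
  have hcross : ∀ m ∈ M, ∀ l ∈ M,
      ((A m * P (n + 1) m) * (A l * P n l) - (A l * P (n + 1) l) * (A m * P n m)) *
        (((1 - x ^ 2) ^ m)⁻¹ - ((1 - x ^ 2) ^ l)⁻¹) ≤ 0 := by
    intro m hm l hl
    rcases le_total m l with hml | hlm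
    · apply mul_nonpos_of_nonneg_of_nonpos
      · have h := hPP m l hml (hmemk l hl)
        have := mul_le_mul_of_nonneg_left h
          (mul_nonneg (le_of_lt (hA0 m hm)) (le_of_lt (hA0 l hl)))
        nlinarith [this]
      · linarith [hTmono m l hml]
    · apply mul_nonpos_of_nonpos_of_nonneg
      · have h := hPP l m hlm (hmemk m hm)
        have := mul_le_mul_of_nonneg_left h
          (mul_nonneg (le_of_lt (hA0 m hm)) (le_of_lt (hA0 l hl)))
        nlinarith [this]
      · linarith [hTmono l m hlm]
  -- now rewrite S values
  have hS1x : S (n + 1) (k + 1) x = 1 + ∑ m ∈ M, (A m * P (n + 1) m) * ((1 - x ^ 2) ^ m)⁻¹ :=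
    hSeq (n + 1) x
  have hS10 : S (n + 1) (k + 1) 0 = 1 + ∑ m ∈ M, A m * P (n + 1) m := by
    rw [hSeq]; simp
  have hS0x : S n (k + 1) x = 1 + ∑ m ∈ M, (A m * P n m) * ((1 - x ^ 2) ^ m)⁻¹ :=
    hSeq n x
  have hS00 : S n (k + 1) 0 = 1 + ∑ m ∈ M, A m * P n m := by
    rw [hSeq]; simp
  have hpos1 : 0 < S n (k + 1) x := by
    rw [hS0x]
    have : 0 ≤ ∑ m ∈ M, (A m * P n m) * ((1 - x ^ 2) ^ m)⁻¹ := Finset.sum_nonneg fun m hm =>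
      mul_nonneg (hb0 m hm) (le_trans zero_le_one (hT1 m hm))
    linarith
  have hpos2 : 0 < S n (k + 1) 0 := by
    rw [hS00]
    have : 0 ≤ ∑ m ∈ M, A m * P n m := Finset.sum_nonneg hb0
    linarith
  rw [div_le_div_iff₀ hpos1 hpos2, hS1x, hS10, hS0x, hS00]
  exact key_ineq_s11 M (fun m => A m * P (n + 1) m) (fun m => A m * P n m)
    (fun m => ((1 - x ^ 2) ^ m)⁻¹) ha0 hb0 hT1 hab hcross
end

section
/- Let n and k be integers with k ≥ 1 and n > k+1. Then S_{n+1,k+1}(0)/S_{n,k+1}(0) = ((n+1)(n-k)/(n(n+k+1))) · ((n+k)(n+k-2)⋯(n-k+2))² / ((n+k-1)(n+k-3)⋯(n-k+1))², where (n+k)(n+k-2)⋯(n-k+2) = ∏_{j=1}^{k} (n+k+2-2j) and (n+k-1)(n+k-3)⋯(n-k+1) = ∏_{j=1}^{k} (n+k+1-2j). -/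
open Polynomial Finset

/-!
Multiplying `S_{n,k+1}(0)` by `∏_{j=1}^{k} (n² - j²)` clears all denominators and leaves a
polynomial `A_k(n)` in `n²`. It is the perfect square `((n+k-1)(n+k-3)⋯(n-k+1))²`: both
sides are `1` and `n²` for `k = 0, 1`, and both satisfy `A_{k+2} = (n² - (k+1)²)² A_k`,
which for `A` follows from a Wilf–Zeilberger certificate making the difference of the two
sides telescope in the summation index. The stated ratio is then the quotient of two such
squares times `∏ (n² - j²) / ∏ ((n+1)² - j²)`, which telescopes to `(n+1)(n-k) / (n(n+k+1))`.
-/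

noncomputable def wallisRatio (m : ℕ) : ℝ := oddDoubleFac m / evenDoubleFac m

theorem wallisRatio_zero : wallisRatio 0 = 1 := by
  simp [wallisRatio, oddDoubleFac, evenDoubleFac]

theorem wallisRatio_succ (m : ℕ) :
    wallisRatio (m + 1) = wallisRatio m * ((2 * m + 1) / (2 * m + 2)) := by
  have h : evenDoubleFac m ≠ 0 := prod_ne_zero_iff.2 fun j _ => by positivity
  simp only [wallisRatio, oddDoubleFac, evenDoubleFac, prod_range_succ] at h ⊢
  field_simp

theorem ascPochhammer_succ_eval_left {R : Type*} [CommSemiring R] (n : ℕ) (z : R) :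
    (ascPochhammer R (n + 1)).eval z = z * (ascPochhammer R n).eval (z + 1) := by
  simp [ascPochhammer_succ_left, eval_comp]

theorem ascPochhammer_add_two_eval_left {R : Type*} [CommSemiring R] (n : ℕ) (z : R) :
    (ascPochhammer R (n + 2)).eval z = z * (z + 1) * (ascPochhammer R n).eval (z + 2) := by
  rw [ascPochhammer_succ_eval_left, ascPochhammer_succ_eval_left, add_assoc, one_add_one_eq_two,
    mul_assoc]

theorem ascPochhammer_add_two_eval {R : Type*} [Semiring R] (n : ℕ) (z : R) :
    (ascPochhammer R (n + 2)).eval z = (ascPochhammer R n).eval z * (z + n) * (z + n + 1) := by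
  rw [ascPochhammer_succ_eval, ascPochhammer_succ_eval, Nat.cast_add_one, add_assoc]

section ClearedSum

variable (x : ℝ)

noncomputable def tailProd (m k : ℕ) : ℝ := ∏ j ∈ Ioc m k, (x ^ 2 - (j : ℝ) ^ 2)

theorem tailProd_self (k : ℕ) : tailProd x k k = 1 := by
  simp [tailProd]

theorem tailProd_succ_right {m k : ℕ} (h : m ≤ k) :
    tailProd x m (k + 1) = tailProd x m k * (x ^ 2 - ((k : ℝ) + 1) ^ 2) := by
  simp only [tailProd, prod_Ioc_succ_top h, Nat.cast_add_one]

theorem tailProd_eq_mul_tailProd_succ {m k : ℕ} (h : m < k) :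
    tailProd x m k = (x ^ 2 - ((m : ℝ) + 1) ^ 2) * tailProd x (m + 1) k := by
  rw [tailProd, ← Icc_add_one_left_eq_Ioc, ← Ioc_insert_left h, prod_insert left_notMem_Ioc,
    Nat.cast_add_one, tailProd]

theorem tailProd_mul_tailProd {l m k : ℕ} (hlm : l ≤ m) (hmk : m ≤ k) :
    tailProd x l m * tailProd x m k = tailProd x l k :=
  prod_Ioc_consecutive _ hlm hmk

theorem tailProd_pos {m k : ℕ} (hx : (k : ℝ) < x) : 0 < tailProd x m k :=
  prod_pos fun j hj => by
    have hj : (j : ℝ) ≤ k := by exact_mod_cast (mem_Ioc.1 hj).2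
    have hj0 : (0 : ℝ) ≤ j := j.cast_nonneg
    nlinarith

theorem tailProd_zero_mul_eq (k : ℕ) :
    tailProd x 0 k * (x * (x + k + 1)) = tailProd (x + 1) 0 k * ((x + 1) * (x - k)) := by
  induction k with
  | zero => simp [tailProd_self]; ring
  | succ k ih =>
    rw [tailProd_succ_right x k.zero_le, tailProd_succ_right (x + 1) k.zero_le]
    push_cast
    linear_combination (x - k - 1) * (x + k + 2) * ih

noncomputable def clearedTerm (k m : ℕ) : ℝ :=
  wallisRatio m * (ascPochhammer ℝ (2 * m)).eval ((k : ℝ) + 1 - m) * tailProd x m k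

/-- `∏_{j=1}^{k} (x² - j²) · S_{x,k+1}(0)`. -/
noncomputable def clearedSum (k : ℕ) : ℝ := ∑ m ∈ range (k + 1), clearedTerm x k m

/-- A Wilf–Zeilberger certificate for the recurrence `clearedSum_add_two`. -/
noncomputable def certificate (k m : ℕ) : ℝ :=
  -2 * (2 * k + 3) * (x ^ 2 - ((k : ℝ) + 1) ^ 2) * m * (x ^ 2 - (m : ℝ) ^ 2) /
    (((k : ℝ) + 1 - m) * ((k : ℝ) + 2 - m)) * clearedTerm x k m

theorem certificate_zero (k : ℕ) : certificate x k 0 = 0 := by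
  simp [certificate]

theorem clearedTerm_sub_eq_certificate_sub {k m : ℕ} (hm : m < k) :
    clearedTerm x (k + 2) m - (x ^ 2 - ((k : ℝ) + 1) ^ 2) ^ 2 * clearedTerm x k m =
      certificate x k (m + 1) - certificate x k m := by
  have hmk : (m : ℝ) + 1 ≤ k := by exact_mod_cast hm
  have h0 : (k : ℝ) - m ≠ 0 := by linarith
  have h1 : (k : ℝ) + 1 - m ≠ 0 := by linarith
  have h2 : (k : ℝ) + 2 - m ≠ 0 := by linarith
  have h3 : 2 * (m : ℝ) + 2 ≠ 0 := by positivity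
  -- expand `(k + 1 - m)_{2m+2}` at both ends
  have hshift : (ascPochhammer ℝ (2 * m)).eval ((k : ℝ) + 3 - m) =
      (ascPochhammer ℝ (2 * m)).eval ((k : ℝ) + 1 - m) * (k + 1 + m) * (k + 2 + m) /
        ((k + 1 - m) * (k + 2 - m)) := by
    have h := ascPochhammer_add_two_eval_left (2 * m) ((k : ℝ) + 1 - m)
    rw [ascPochhammer_add_two_eval, show (k : ℝ) + 1 - m + 2 = k + 3 - m by ring] at h
    push_cast at h
    rw [eq_div_iff (mul_ne_zero h1 h2)]
    linear_combination -h
  have hnext : (ascPochhammer ℝ (2 * (m + 1))).eval ((k : ℝ) + 1 - (m + 1 : ℕ)) =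
      (k - m) * (ascPochhammer ℝ (2 * m)).eval ((k : ℝ) + 1 - m) * (k + 1 + m) := by
    rw [mul_add_one, ascPochhammer_succ_eval, ascPochhammer_succ_eval_left]
    push_cast
    rw [show (k : ℝ) + 1 - (m + 1) + 1 = k + 1 - m by ring]
    ring
  unfold certificate clearedTerm
  rw [wallisRatio_succ, hnext, tailProd_succ_right x (Nat.le_succ_of_le hm.le),
    tailProd_succ_right x hm.le, tailProd_eq_mul_tailProd_succ x hm]
  push_cast
  rw [show (k : ℝ) + 2 + 1 - m = k + 3 - m by ring, show (k : ℝ) + 1 - (m + 1) = k - m by ring,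
    show (k : ℝ) + 2 - (m + 1) = k + 1 - m by ring, hshift]
  generalize (ascPochhammer ℝ (2 * m)).eval ((k : ℝ) + 1 - m) = E
  field_simp
  ring

theorem clearedSum_boundary (k : ℕ) :
    certificate x k k + clearedTerm x (k + 2) k + clearedTerm x (k + 2) (k + 1) +
      clearedTerm x (k + 2) (k + 2) = (x ^ 2 - ((k : ℝ) + 1) ^ 2) ^ 2 * clearedTerm x k k := by
  have h3 : (ascPochhammer ℝ (2 * k)).eval 3 = ((2 * k + 2).factorial : ℝ) / 2 := by
    have h := factorial_mul_ascPochhammer ℝ 2 (2 * k)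
    norm_num at h
    rw [add_comm] at h
    linear_combination h / 2
  have h2 : (ascPochhammer ℝ (2 * (k + 1))).eval 2 = ((2 * k + 3).factorial : ℝ) := by
    have h := factorial_mul_ascPochhammer ℝ 1 (2 * (k + 1))
    norm_num at h
    rw [h]
    ring_nf
  unfold certificate clearedTerm
  rw [tailProd_succ_right x (Nat.le_succ k), tailProd_succ_right x le_rfl,
    tailProd_succ_right x le_rfl, tailProd_self, tailProd_self, tailProd_self,
    show 2 * (k + 2) = 2 * k + 3 + 1 by ring]
  simp only [wallisRatio_succ]
  push_cast
  rw [show (k : ℝ) + 2 + 1 - k = 3 by ring, show (k : ℝ) + 2 + 1 - (k + 1) = 2 by ring,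
    show (k : ℝ) + 2 + 1 - (k + 2) = 1 by ring, show (k : ℝ) + 1 - k = 1 by ring, h3, h2,
    ascPochhammer_eval_one, ascPochhammer_eval_one]
  simp only [Nat.factorial_succ]
  push_cast
  field_simp
  ring

theorem clearedSum_add_two (k : ℕ) :
    clearedSum x (k + 2) = (x ^ 2 - ((k : ℝ) + 1) ^ 2) ^ 2 * clearedSum x k := by
  have htel : ∑ m ∈ range k, (clearedTerm x (k + 2) m -
      (x ^ 2 - ((k : ℝ) + 1) ^ 2) ^ 2 * clearedTerm x k m) = certificate x k k := by
    rw [sum_congr rfl fun m hm => clearedTerm_sub_eq_certificate_sub x (mem_range.1 hm),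
      sum_range_sub, certificate_zero, sub_zero]
  rw [sum_sub_distrib, ← mul_sum] at htel
  simp only [clearedSum, sum_range_succ]
  linear_combination htel + clearedSum_boundary x k

noncomputable def stepTwoProd (k : ℕ) : ℝ := ∏ j ∈ Icc 1 k, (x + k + 1 - 2 * (j : ℝ))

theorem stepTwoProd_add_two (k : ℕ) :
    stepTwoProd x (k + 2) = (x + k + 1) * (x - (k + 1)) * stepTwoProd x k := by
  rw [stepTwoProd, prod_Icc_succ_top (by omega), ← Ioc_insert_left (by omega),
    prod_insert left_notMem_Ioc, ← Icc_add_one_left_eq_Ioc, ← map_add_right_Icc 1 k 1, prod_map,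
    stepTwoProd]
  push_cast [addRightEmbedding_apply]
  rw [prod_congr rfl fun (j : ℕ) _ =>
    show x + (k + 2) + 1 - 2 * ((j : ℝ) + 1) = x + k + 1 - 2 * j by ring]
  ring

theorem stepTwoProd_pos {k : ℕ} (hx : (k : ℝ) < x + 1) : 0 < stepTwoProd x k :=
  prod_pos fun j hj => by
    have hj : (j : ℝ) ≤ k := by exact_mod_cast (mem_Icc.1 hj).2
    linarith

theorem clearedSum_eq_sq (k : ℕ) : clearedSum x k = stepTwoProd x k ^ 2 := by
  induction k using Nat.twoStepInduction with
  | zero => simp [clearedSum, clearedTerm, stepTwoProd, tailProd, wallisRatio_zero]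
  | one =>
    simp [clearedSum, clearedTerm, stepTwoProd, tailProd, sum_range_succ, wallisRatio_succ,
      wallisRatio_zero]
    ring
  | more k ih _ =>
    rw [clearedSum_add_two, ih, stepTwoProd_add_two]
    ring

end ClearedSum

theorem S_eq_clearedSum_div {n k : ℕ} (hkn : k < n) :
    S n (k + 1) 0 = clearedSum n k / tailProd n 0 k := by
  have hpos : ∀ m, 0 < tailProd n m k := fun m => tailProd_pos _ (by exact_mod_cast hkn)
  rw [eq_div_iff (hpos 0).ne', S, clearedSum, Nat.add_sub_cancel, range_eq_Ico,
    sum_eq_sum_Ico_succ_bot (by omega : 0 < k + 1), zero_add, Ico_add_one_right_eq_Icc, add_mul,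
    one_mul, sum_mul]
  congr 1
  · simp [clearedTerm, wallisRatio_zero]
  refine sum_congr rfl fun m hm => ?_
  have hmk := (mem_Icc.1 hm).2
  have hI : Icc 1 m = Ioc 0 m := Icc_add_one_left_eq_Ioc 0 m
  have h0m : tailProd n 0 m ≠ 0 := (tailProd_pos _ (by exact_mod_cast hkn.trans_le' hmk)).ne'
  rw [prod_inv_distrib, hI, ← tailProd, ← tailProd_mul_tailProd _ m.zero_le hmk, clearedTerm,
    wallisRatio, zero_pow two_ne_zero, sub_zero, one_pow, inv_one, mul_one]
  push_cast
  field_simp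

theorem stmt12_general (n k : ℕ) (hn : k + 1 < n) :
    S (n + 1) (k + 1) 0 / S n (k + 1) 0 =
      ((n : ℝ) + 1) * ((n : ℝ) - (k : ℝ)) / ((n : ℝ) * ((n : ℝ) + (k : ℝ) + 1)) *
        ((∏ j ∈ Finset.Icc 1 k, ((n : ℝ) + (k : ℝ) + 2 - 2 * (j : ℝ))) ^ 2 /
          (∏ j ∈ Finset.Icc 1 k, ((n : ℝ) + (k : ℝ) + 1 - 2 * (j : ℝ))) ^ 2) := by
  have hkn : (k : ℝ) + 1 < n := by exact_mod_cast hn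
  rw [S_eq_clearedSum_div (by omega), S_eq_clearedSum_div (by omega), clearedSum_eq_sq,
    clearedSum_eq_sq, Nat.cast_add_one]
  have hD : stepTwoProd ((n : ℝ) + 1) k = ∏ j ∈ Icc 1 k, ((n : ℝ) + k + 2 - 2 * j) :=
    prod_congr rfl fun j _ => by ring
  rw [hD, ← stepTwoProd]
  have hT₀ := tailProd_pos (n : ℝ) (m := 0) (k := k) (by linarith)
  have hT₁ := tailProd_pos ((n : ℝ) + 1) (m := 0) (k := k) (by linarith)
  have hD₀ := stepTwoProd_pos (n : ℝ) (k := k) (by linarith)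
  have hn₀ : (0 : ℝ) < n := by linarith
  field_simp
  linear_combination
    (∏ j ∈ Icc 1 k, ((n : ℝ) + k + 2 - 2 * j)) ^ 2 * tailProd_zero_mul_eq (n : ℝ) k

theorem stmt12 (n k : ℕ) (hk : 1 ≤ k) (hn : k + 1 < n) :
    S (n + 1) (k + 1) 0 / S n (k + 1) 0 =
      ((n : ℝ) + 1) * ((n : ℝ) - (k : ℝ)) / ((n : ℝ) * ((n : ℝ) + (k : ℝ) + 1)) *
        ((∏ j ∈ Finset.Icc 1 k, ((n : ℝ) + (k : ℝ) + 2 - 2 * (j : ℝ))) ^ 2 /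
          (∏ j ∈ Finset.Icc 1 k, ((n : ℝ) + (k : ℝ) + 1 - 2 * (j : ℝ))) ^ 2) :=
  stmt12_general n k hn
end

section
/- Let n and k be integers with k ≥ 1 and n > k+1, and let ω = ω_{n,k} be the largest real zero of T_n^{(k+1)}. Then τ_{n,k} = -1 + Σ_{m=1}^{n-k} (-1)^{m+1} · binom(n-k, m) · (n+k)_m / (k+1/2)_m · ((1-ω)/2)^m, where (a)_m = a(a+1)⋯(a+m-1) is the Pochhammer symbol. -/
/-!
Write `p = T_n^{(k)}` and expand it in Taylor series at `1`. Evaluating the Chebyshev differential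
equation at `x = 1` gives `(2j + 1) T_n^{(j+1)}(1) = (n² - j²) T_n^{(j)}(1)`, hence
`p^{(m)}(1) / (m! p(1)) = C(n-k, m) (n+k)_m / (2^m (k+1/2)_m)`, and with `ω - 1 = -2 (1 - ω)/2` the
expansion reads `p(ω) / p(1) = 1 - Σ_{m ≥ 1} (-1)^{m+1} C(n-k, m) (n+k)_m / (k+1/2)_m ((1-ω)/2)^m`.

It remains to see `p(ω) < 0`. Since `T_n` has `n` distinct real roots, Rolle's theorem gives `p`
at least `n - k` distinct real roots, and the root count of `p'` forces one of them, `r`, to lie beyond `ω`.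
On the other hand `p' > 0` on `(ω, ∞)`: it has no root there and is positive on `[1, ∞)`, where
all Taylor coefficients of `T_n` at `1` are positive. So `p` increases from `p(ω)` to `0` on
`[ω, r]`.
-/

open Polynomial Finset

namespace Polynomial

theorem eval_eq_sum_range_iterate_derivative {K : Type*} [Field K] [CharZero K] {p : K[X]}
    {d : ℕ} (hp : p.natDegree ≤ d) (a x : K) :
    p.eval x = ∑ m ∈ range (d + 1), (derivative^[m] p).eval a / m.factorial * (x - a) ^ m := by
  rw [← taylor_eval_sub a p x, eval_eq_sum_range' (n := d + 1) (by rw [natDegree_taylor]; omega)]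
  refine sum_congr rfl fun m _ => ?_
  rw [taylor_coeff, ← factorial_smul_hasseDeriv, LinearMap.smul_apply, nsmul_eq_mul, eval_mul,
    eval_natCast, mul_div_cancel_left₀ _ (Nat.cast_ne_zero.2 m.factorial_ne_zero)]

theorem card_roots_toFinset_sub_le_iterate_derivative (p : ℝ[X]) (j : ℕ) :
    p.roots.toFinset.card - j ≤ (derivative^[j] p).roots.toFinset.card := by
  induction j with
  | zero => simp
  | succ j ih =>
    rw [Function.iterate_succ_apply']
    have := card_roots_toFinset_le_derivative (derivative^[j] p)
    omega

/- Rolle's theorem between consecutive roots of `p` yields `#roots p - 1` roots of `p'` below the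
largest root of `p`; if `ω` were not below it, `p'` would have more roots than its degree. -/
theorem exists_isRoot_gt_of_isRoot_derivative {p : ℝ[X]}
    (hcard : (derivative p).natDegree < p.roots.toFinset.card) {ω : ℝ}
    (hω : (derivative p).IsRoot ω) : ∃ r, p.IsRoot r ∧ ω < r := by
  have hp' : derivative p ≠ 0 := by
    intro h
    rw [eq_C_of_derivative_eq_zero h, roots_C] at hcard
    simp at hcard
  have hp : p ≠ 0 := by rintro rfl; simp at hp'
  by_contra! hle
  have hinter := card_le_of_interleaved (s := p.roots.toFinset)
    (t := (derivative p).roots.toFinset.erase ω) fun x hx y hy hxy _ => by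
    rw [Multiset.mem_toFinset, mem_roots hp] at hx hy
    obtain ⟨z, hz, hz0⟩ := exists_deriv_eq_zero hxy p.continuousOn (hx.trans hy.symm)
    refine ⟨z, mem_erase.2 ⟨(hz.2.trans_le (hle y hy)).ne, ?_⟩, hz⟩
    rwa [Multiset.mem_toFinset, mem_roots hp', IsRoot, ← p.deriv]
  have hωmem : ω ∈ (derivative p).roots.toFinset := by
    rwa [Multiset.mem_toFinset, mem_roots hp']
  have hroots := (Multiset.toFinset_card_le _).trans (card_roots' (derivative p))
  rw [card_erase_of_mem hωmem] at hinter
  have := card_pos.2 ⟨ω, hωmem⟩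
  omega

theorem eval_pos_of_forall_isRoot_le {q : ℝ[X]} {ω b : ℝ} (hroots : ∀ x, q.IsRoot x → x ≤ ω)
    (hb : ω < b) (hqb : 0 < q.eval b) {x : ℝ} (hx : ω < x) : 0 < q.eval x := by
  by_contra! hqx
  obtain ⟨c, hc, hc0⟩ := isPreconnected_Ioi.intermediate_value hx hb q.continuousOn
    ⟨hqx, hqb.le⟩
  exact (hroots c hc0).not_gt hc

end Polynomial

namespace Polynomial.Chebyshev

theorem natDegree_iterate_derivative_T_real_le (n j : ℕ) :
    (derivative^[j] (T ℝ n)).natDegree ≤ n - j := by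
  simpa using natDegree_iterate_derivative (T ℝ n) j

theorem card_roots_toFinset_T_real (n : ℕ) : (T ℝ n).roots.toFinset.card = n := by
  rw [roots_T_real, Finset.val_toFinset, card_image_of_injOn, card_range]
  exact (range n).nodup_map_iff_injOn.mp (roots_T_real_nodup n)

theorem iterate_derivative_T_real_eval_one_pos {n j : ℕ} (hj : j ≤ n) :
    0 < (derivative^[j] (T ℝ n)).eval 1 := by
  rw [iterate_derivative_T_eval_one_eq_div]
  push_cast
  refine div_pos (prod_pos fun l hl => ?_) (prod_pos fun l _ => by positivity)
  have : (l : ℝ) + 1 ≤ n := by exact_mod_cast (mem_range.1 hl).trans_le hj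
  nlinarith [(l.cast_nonneg : (0 : ℝ) ≤ l)]

theorem iterate_derivative_T_real_eval_pos_of_one_le {n j : ℕ} (hj : j ≤ n) {x : ℝ}
    (hx : 1 ≤ x) : 0 < (derivative^[j] (T ℝ n)).eval x := by
  rw [eval_eq_sum_range_iterate_derivative (natDegree_iterate_derivative_T_real_le n j) 1,
    sum_range_succ']
  refine add_pos_of_nonneg_of_pos (sum_nonneg fun m hm => ?_) ?_
  · rw [← Function.iterate_add_apply]
    have := iterate_derivative_T_real_eval_one_pos (n := n) (j := m + 1 + j)
      (by have := mem_range.1 hm; omega)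
    have : (0 : ℝ) ≤ x - 1 := by linarith
    positivity
  · simpa using iterate_derivative_T_real_eval_one_pos hj

theorem iterate_derivative_T_eval_one_add_mul {K : Type*} [Field K] [CharZero K] {n k m : ℕ}
    (hkm : k + m ≤ n) :
    (derivative^[k + m] (T K n)).eval 1 * (2 ^ m * (ascPochhammer K m).eval ((k : K) + 1 / 2)) =
      (derivative^[k] (T K n)).eval 1 * (n - k).descFactorial m *
        (ascPochhammer K m).eval ((n : K) + k) := by
  induction m with
  | zero => simp
  | succ m ih =>
    have hrec := iterate_derivative_T_eval_one_recurrence (R := K) n (k + m)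
    have hdesc :
        ((n - k).descFactorial (m + 1) : K) = (n - k - m : K) * (n - k).descFactorial m := by
      rw [Nat.descFactorial_succ, Nat.cast_mul, Nat.cast_sub (by omega), Nat.cast_sub (by omega)]
    rw [← add_assoc, hdesc, ascPochhammer_succ_eval, ascPochhammer_succ_eval]
    push_cast at hrec
    linear_combination (2 ^ m * (ascPochhammer K m).eval ((k : K) + 1 / 2)) * hrec +
      ((n : K) ^ 2 - ((k : K) + m) ^ 2) * ih (by omega)

theorem iterate_derivative_T_real_eval_one_add_div_factorial {n k m : ℕ} (hkm : k + m ≤ n) :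
    (derivative^[k + m] (T ℝ n)).eval 1 / m.factorial =
      (derivative^[k] (T ℝ n)).eval 1 * (n - k).choose m *
        ((ascPochhammer ℝ m).eval ((n : ℝ) + k) / (ascPochhammer ℝ m).eval ((k : ℝ) + 1 / 2)) /
          2 ^ m := by
  have hprod := iterate_derivative_T_eval_one_add_mul (K := ℝ) hkm
  have hP : 0 < (ascPochhammer ℝ m).eval ((k : ℝ) + 1 / 2) := ascPochhammer_pos m _ (by positivity)
  rw [Nat.descFactorial_eq_factorial_mul_choose, Nat.cast_mul] at hprod
  generalize (ascPochhammer ℝ m).eval ((k : ℝ) + 1 / 2) = P at hprod hP ⊢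
  field_simp
  linear_combination hprod

theorem iterate_derivative_T_real_eval_neg_of_isGreatest_root {n k : ℕ} (hn : k + 1 < n) {ω : ℝ}
    (hωroot : (derivative^[k + 1] (T ℝ n)).eval ω = 0)
    (hωmax : ∀ x : ℝ, (derivative^[k + 1] (T ℝ n)).eval x = 0 → x ≤ ω) :
    (derivative^[k] (T ℝ n)).eval ω < 0 := by
  have hcard : (derivative^[k + 1] (T ℝ n)).natDegree <
      (derivative^[k] (T ℝ n)).roots.toFinset.card := by
    have hdeg := natDegree_iterate_derivative_T_real_le n (k + 1)
    have hroots := card_roots_toFinset_sub_le_iterate_derivative (T ℝ n) k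
    rw [card_roots_toFinset_T_real] at hroots
    omega
  set p := derivative^[k] (T ℝ n)
  have hp' : derivative p = derivative^[k + 1] (T ℝ n) := (Function.iterate_succ_apply' ..).symm
  rw [← hp'] at hcard
  obtain ⟨r, hr, hωr⟩ := exists_isRoot_gt_of_isRoot_derivative hcard (hp' ▸ hωroot)
  have hderiv_pos : ∀ x ∈ interior (Set.Ici ω), 0 < deriv p.eval x := by
    intro x hx
    rw [interior_Ici] at hx
    rw [Polynomial.deriv, hp']
    exact eval_pos_of_forall_isRoot_le hωmax (lt_max_of_lt_left (lt_add_one ω))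
      (iterate_derivative_T_real_eval_pos_of_one_le (by omega) (le_max_right _ 1)) hx
  have hmono := strictMonoOn_of_deriv_pos (convex_Ici ω) p.continuousOn hderiv_pos
  simpa [hr.eq_zero] using hmono Set.self_mem_Ici hωr.le hωr

end Polynomial.Chebyshev

theorem stmt14_general (n k : ℕ) (hn : k + 1 < n) (ω : ℝ)
    (hωroot : (derivative^[k + 1] (Chebyshev.T ℝ (n : ℤ))).eval ω = 0)
    (hωmax : ∀ x : ℝ, (derivative^[k + 1] (Chebyshev.T ℝ (n : ℤ))).eval x = 0 → x ≤ ω) :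
    |(derivative^[k] (Chebyshev.T ℝ (n : ℤ))).eval ω| /
        (derivative^[k] (Chebyshev.T ℝ (n : ℤ))).eval 1 =
      -1 + ∑ m ∈ Finset.Icc 1 (n - k), (-1 : ℝ) ^ (m + 1) * (Nat.choose (n - k) m : ℝ) *
        ((ascPochhammer ℝ m).eval ((n : ℝ) + (k : ℝ)) /
          (ascPochhammer ℝ m).eval ((k : ℝ) + 1 / 2)) *
        ((1 - ω) / 2) ^ m := by
  have hneg := Chebyshev.iterate_derivative_T_real_eval_neg_of_isGreatest_root hn hωroot hωmax
  have hpos := Chebyshev.iterate_derivative_T_real_eval_one_pos (n := n) (j := k) (by omega)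
  rw [abs_of_neg hneg, div_eq_iff hpos.ne',
    eval_eq_sum_range_iterate_derivative (Chebyshev.natDegree_iterate_derivative_T_real_le n k) 1,
    sum_range_eq_add_Ico _ (by omega), Ico_add_one_right_eq_Icc]
  simp only [Function.iterate_zero_apply, Nat.factorial_zero, Nat.cast_one, div_one, pow_zero,
    mul_one]
  rw [add_mul, sum_mul, neg_add, ← sum_neg_distrib, neg_one_mul]
  congr 1
  refine sum_congr rfl fun m hm => ?_
  rw [← Function.iterate_add_apply, add_comm m k,
    Chebyshev.iterate_derivative_T_real_eval_one_add_div_factorial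
      (by have := (mem_Icc.1 hm).2; omega),
    show ω - 1 = -2 * ((1 - ω) / 2) by ring, mul_pow, neg_pow]
  field_simp
  ring

theorem stmt14 (n k : ℕ) (hk : 1 ≤ k) (hn : k + 1 < n) (ω : ℝ)
    (hωroot : (derivative^[k + 1] (Chebyshev.T ℝ (n : ℤ))).eval ω = 0)
    (hωmax : ∀ x : ℝ, (derivative^[k + 1] (Chebyshev.T ℝ (n : ℤ))).eval x = 0 → x ≤ ω) :
    |(derivative^[k] (Chebyshev.T ℝ (n : ℤ))).eval ω| /
        (derivative^[k] (Chebyshev.T ℝ (n : ℤ))).eval 1 =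
      -1 + ∑ m ∈ Finset.Icc 1 (n - k), (-1 : ℝ) ^ (m + 1) * (Nat.choose (n - k) m : ℝ) *
        ((ascPochhammer ℝ m).eval ((n : ℝ) + (k : ℝ)) /
          (ascPochhammer ℝ m).eval ((k : ℝ) + 1 / 2)) *
        ((1 - ω) / 2) ^ m :=
  stmt14_general n k hn ω hωroot hωmax
end
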